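/- arXiv:2110.12828 — 3 statements merged into one kernel-verified Lean document; each statement's English description precedes it below -/
import Mathlib

section
/- For an n-dimensional normed space X and every k ∈ ℕ, the ratio of projective to injective norms on X^{⊗k} satisfies ρ_k(X) ≤ n^{1-1/k}; that is, ‖z‖_{π_k(X)} ≤ n^{k-1} ‖z‖_{ε_k(X)} for all z ∈ X^{⊗k}. -/
open scoped TensorProduct BigOperators
open Filter MeasureTheory

noncomputable section

variable {X Y : Type*} [NormedAddCommGroup X] [NormedSpace ℝ X]
  [NormedAddCommGroup Y] [NormedSpace ℝ Y]

/-- The functional `λ₁ ⊗ ⋯ ⊗ λ_k` on the `k`-fold tensor power. -/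
def dualTensor (k : ℕ) (f : Fin k → (X →L[ℝ] ℝ)) :
    (⨂[ℝ] _ : Fin k, X) →ₗ[ℝ] ℝ :=
  PiTensorProduct.lift ((MultilinearMap.mkPiAlgebra ℝ (Fin k) ℝ).compLinearMap
    (fun i => (f i).toLinearMap))

/-- Injective tensor norm on the `k`-fold tensor power. -/
def injNorm (k : ℕ) (z : ⨂[ℝ] _ : Fin k, X) : ℝ :=
  sSup { r | ∃ f : Fin k → (X →L[ℝ] ℝ), (∀ i, ‖f i‖ ≤ 1) ∧ r = |dualTensor k f z| }

/-- Projective tensor norm on the `k`-fold tensor power. -/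
def projNorm (k : ℕ) (z : ⨂[ℝ] _ : Fin k, Y) : ℝ :=
  sInf { r | ∃ (n : ℕ) (x : Fin n → Fin k → Y),
    z = ∑ j, PiTensorProduct.tprod ℝ (x j) ∧ r = ∑ j, ∏ i, ‖x j i‖ }

/-- The `k`-th tensor power of an operator. -/
def tensorPow (k : ℕ) (T : X →L[ℝ] Y) :
    (⨂[ℝ] _ : Fin k, X) →ₗ[ℝ] (⨂[ℝ] _ : Fin k, Y) :=
  PiTensorProduct.map (fun _ => T.toLinearMap)

/-- `τ_k(T) = ‖T^{⊗k}‖_{ε_k(X)→π_k(Y)}^{1/k}`. -/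
def tau (k : ℕ) (T : X →L[ℝ] Y) : ℝ :=
  (sSup { r | ∃ z : ⨂[ℝ] _ : Fin k, X, injNorm k z ≤ 1 ∧
      r = projNorm k (tensorPow k T z) }) ^ ((k : ℝ)⁻¹)

/-- `τ_∞(T) = lim_k τ_k(T) = sup_{k ≥ 1} τ_k(T)`. -/
def tauInf (T : X →L[ℝ] Y) : ℝ :=
  sSup { r | ∃ k : ℕ, 1 ≤ k ∧ r = tau k T }

/-- `ρ_k(X)`. -/
def rho (k : ℕ) (X : Type*) [NormedAddCommGroup X] [NormedSpace ℝ X] : ℝ :=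
  tau k (ContinuousLinearMap.id ℝ X)

/-- `ρ_∞(X)`. -/
def rhoInf (X : Type*) [NormedAddCommGroup X] [NormedSpace ℝ X] : ℝ :=
  tauInf (ContinuousLinearMap.id ℝ X)

/-- Nuclear norm. -/
def nuclearNorm (T : X →L[ℝ] Y) : ℝ :=
  sInf { r | ∃ (n : ℕ) (g : Fin n → (X →L[ℝ] ℝ)) (y : Fin n → Y),
    (∀ v, T v = ∑ j, g j v • y j) ∧ r = ∑ j, ‖g j‖ * ‖y j‖ }

/-- Banach–Mazur distance. -/
def BMdist (X Y : Type*) [NormedAddCommGroup X] [NormedSpace ℝ X]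
    [NormedAddCommGroup Y] [NormedSpace ℝ Y] : ℝ :=
  sInf { r | ∃ e : X ≃L[ℝ] Y, r = ‖(e : X →L[ℝ] Y)‖ * ‖(e.symm : Y →L[ℝ] X)‖ }

/-- Nuclear tensorization property. -/
def NTP (X Y : Type*) [NormedAddCommGroup X] [NormedSpace ℝ X]
    [NormedAddCommGroup Y] [NormedSpace ℝ Y] : Prop :=
  ∀ T : X →L[ℝ] Y, tauInf T = nuclearNorm T



lemma auerbach [FiniteDimensional ℝ X] (n : ℕ) (hn : Module.finrank ℝ X = n) :
    ∃ b : Module.Basis (Fin n) ℝ X, (∀ i, ‖b i‖ ≤ 1) ∧ (∀ i u, |b.coord i u| ≤ ‖u‖) := by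
  classical
  let e : Module.Basis (Fin n) ℝ X := (Module.finBasis ℝ X).reindex (finCongr hn)
  have hFcont : Continuous fun v : Fin n → X => |e.det v| := by
    have h1 : Continuous fun v : Fin n → X => e.det v := by
      simp only [Module.Basis.det_apply]
      refine Continuous.matrix_det ?_
      refine continuous_pi fun i => continuous_pi fun j => ?_
      have : Continuous (e.coord i) := (e.coord i).continuous_of_finiteDimensional
      exact this.comp (continuous_apply j)
    exact h1.abs
  set K : Set (Fin n → X) := Set.univ.pi fun _ => Metric.closedBall (0:X) 1 with hKdef
  have hK : IsCompact K := isCompact_univ_pi fun _ => isCompact_closedBall 0 1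
  have h0K : (0 : Fin n → X) ∈ K := by
    intro i _; simp
  obtain ⟨v, hvK, hmax⟩ := hK.exists_isMaxOn ⟨0, h0K⟩ hFcont.continuousOn
  have hvnorm : ∀ i, ‖v i‖ ≤ 1 := by
    intro i
    have := hvK i (Set.mem_univ i)
    simpa [mem_closedBall_zero_iff] using this
  have hvpos : 0 < |e.det v| := by
    set u : Fin n → X := fun i => ‖e i‖⁻¹ • e i with hu
    have heine : ∀ i, e i ≠ 0 := fun i => e.ne_zero i
    have huK : u ∈ K := by
      intro i _
      simp only [hu, Metric.mem_closedBall, dist_zero_right, norm_smul, norm_inv, norm_norm]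
      rw [inv_mul_cancel₀ (norm_ne_zero_iff.mpr (heine i))]
    have hFu : |e.det u| = ∏ i, ‖e i‖⁻¹ := by
      have : e.det u = (∏ i, ‖e i‖⁻¹) • e.det e := by
        simpa [hu] using e.det.toMultilinearMap.map_smul_univ (fun i => ‖e i‖⁻¹) e
      have hp : (0:ℝ) < ∏ i, ‖e i‖⁻¹ :=
        Finset.prod_pos fun i _ => inv_pos.mpr (norm_pos_iff.mpr (heine i))
      rw [this, e.det_self, smul_eq_mul, mul_one, abs_of_pos hp]
    have hpos : 0 < |e.det u| := by
      rw [hFu]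
      exact Finset.prod_pos fun i _ => inv_pos.mpr (norm_pos_iff.mpr (heine i))
    exact lt_of_lt_of_le hpos (hmax huK)
  have hdet : e.det v ≠ 0 := by
    intro h; rw [h] at hvpos; simp at hvpos
  obtain ⟨hli, hsp⟩ := (Module.Basis.is_basis_iff_det e).mpr hdet.isUnit
  let b : Module.Basis (Fin n) ℝ X := Module.Basis.mk hli hsp.ge
  have hb : ⇑b = v := Module.Basis.coe_mk _ _
  have hcoord1 : ∀ i (s : X), ‖s‖ ≤ 1 → |b.coord i s| ≤ 1 := by
    intro i s hs
    have hrep : s = ∑ j, b.repr s j • v j := by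
      conv_lhs => rw [← b.sum_repr s]
      simp [hb]
    have h1 : e.det (Function.update v i s) = b.repr s i * e.det v := by
      conv_lhs => rw [hrep]
      rw [e.det.map_update_sum]
      rw [Finset.sum_eq_single i]
      · rw [e.det.map_update_smul, Function.update_eq_self, smul_eq_mul]
      · intro j _ hj
        rw [e.det.map_update_smul, e.det.map_update_self v (Ne.symm hj), smul_zero]
      · intro h; exact absurd (Finset.mem_univ i) h
    have hmem : Function.update v i s ∈ K := by
      intro j _
      simp only [Metric.mem_closedBall, dist_zero_right]
      rcases eq_or_ne j i with rfl | hji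
      · rwa [Function.update_self]
      · rw [Function.update_of_ne hji]; exact hvnorm j
    have h2 : |e.det (Function.update v i s)| ≤ |e.det v| := hmax hmem
    rw [h1, abs_mul] at h2
    have hdp : (0:ℝ) < |e.det v| := abs_pos.mpr hdet
    have : |(b.repr s) i| * |e.det v| ≤ 1 * |e.det v| := by simpa using h2
    have := le_of_mul_le_mul_right this hdp
    simpa [Module.Basis.coord_apply] using this
  refine ⟨b, ?_, ?_⟩
  · intro i; rw [hb]; exact hvnorm i
  · intro i u
    rcases eq_or_ne u 0 with rfl | hu
    · simp
    · have hnu : ‖u‖ ≠ 0 := norm_ne_zero_iff.mpr hu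
      have hs : ‖(‖u‖⁻¹ • u)‖ ≤ 1 := by
        rw [norm_smul, norm_inv, norm_norm, inv_mul_cancel₀ hnu]
      have := hcoord1 i _ hs
      have heq : b.coord i u = ‖u‖ * b.coord i (‖u‖⁻¹ • u) := by
        rw [_root_.map_smul, smul_eq_mul, ← mul_assoc, mul_inv_cancel₀ hnu, one_mul]
      rw [heq, abs_mul, abs_of_nonneg (norm_nonneg u)]
      calc ‖u‖ * |b.coord i (‖u‖⁻¹ • u)| ≤ ‖u‖ * 1 :=
        mul_le_mul_of_nonneg_left this (norm_nonneg u)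
      _ = ‖u‖ := mul_one _

lemma dualTensor_tprod (k : ℕ) (f : Fin k → (X →L[ℝ] ℝ)) (x : Fin k → X) :
    dualTensor k f (PiTensorProduct.tprod ℝ x) = ∏ i, f i (x i) := by
  simp [dualTensor, PiTensorProduct.lift.tprod]

lemma rep_exists (k n : ℕ) (b : Module.Basis (Fin n) ℝ X) (z : ⨂[ℝ] _ : Fin k, X) :
    ∃ c : (Fin k → Fin n) → ℝ,
      z = ∑ α : Fin k → Fin n, c α • PiTensorProduct.tprod ℝ (fun i => b (α i)) := by
  classical
  induction z using PiTensorProduct.induction_on with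
  | smul_tprod r x =>
      refine ⟨fun α => r * ∏ i, b.repr (x i) (α i), ?_⟩
      have hx : x = fun i => ∑ j, b.repr (x i) j • b j := by
        funext i; exact (b.sum_repr (x i)).symm
      conv_lhs => rw [hx]
      rw [show ((PiTensorProduct.tprod ℝ) fun i => ∑ j, b.repr (x i) j • b j)
          = ∑ α : Fin k → Fin n,
            (PiTensorProduct.tprod ℝ) (fun i => b.repr (x i) (α i) • b (α i)) from
        (PiTensorProduct.tprod ℝ).map_sum (fun i j => b.repr (x i) j • b j)]
      rw [Finset.smul_sum]
      refine Finset.sum_congr rfl fun α _ => ?_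
      rw [(PiTensorProduct.tprod ℝ).map_smul_univ (fun i => b.repr (x i) (α i))
        (fun i => b (α i))]
      rw [smul_smul]
  | add x y hx hy =>
      obtain ⟨c, hc⟩ := hx
      obtain ⟨d, hd⟩ := hy
      exact ⟨c + d, by simp [hc, hd, add_smul, Finset.sum_add_distrib]⟩

lemma main_ineq [FiniteDimensional ℝ X] (n m : ℕ) (hn : Module.finrank ℝ X = n)
    (z : ⨂[ℝ] _ : Fin (m+1), X) :
    projNorm (m+1) z ≤ (n:ℝ)^m * injNorm (m+1) z := by
  classical
  obtain ⟨b, hb1, hb2⟩ := auerbach n hn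
  obtain ⟨c, hc⟩ := rep_exists (m+1) n b z
  -- coordinate functionals as continuous maps, norm ≤ 1
  set coordL : Fin n → (X →L[ℝ] ℝ) := fun j => LinearMap.toContinuousLinearMap (b.coord j)
    with hcoordL
  have hcoordL1 : ∀ j, ‖coordL j‖ ≤ 1 := by
    intro j
    refine ContinuousLinearMap.opNorm_le_bound _ zero_le_one fun u => ?_
    rw [one_mul]
    simpa [hcoordL] using hb2 j u
  have hcoordL_basis : ∀ j j', coordL j (b j') = if j' = j then 1 else 0 := by
    intro j j'
    simp [hcoordL, Module.Basis.coord_apply, Module.Basis.repr_self, Finsupp.single_apply]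
  -- dualTensor applied to z via the representation
  have hdual : ∀ f : Fin (m+1) → (X →L[ℝ] ℝ),
      dualTensor (m+1) f z = ∑ α : Fin (m+1) → Fin n, c α * ∏ i, f i (b (α i)) := by
    intro f
    rw [hc, _root_.map_sum]
    refine Finset.sum_congr rfl fun α _ => ?_
    rw [_root_.map_smul, dualTensor_tprod, smul_eq_mul]
  -- injNorm set is bounded above
  have hbdd : BddAbove { r | ∃ f : Fin (m+1) → (X →L[ℝ] ℝ),
      (∀ i, ‖f i‖ ≤ 1) ∧ r = |dualTensor (m+1) f z| } := by
    refine ⟨∑ α : Fin (m+1) → Fin n, |c α|, ?_⟩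
    rintro r ⟨f, hf, rfl⟩
    rw [hdual f]
    refine le_trans (Finset.abs_sum_le_sum_abs _ _) ?_
    refine Finset.sum_le_sum fun α _ => ?_
    rw [abs_mul]
    refine mul_le_of_le_one_right (abs_nonneg _) ?_
    rw [Finset.abs_prod]
    refine Finset.prod_le_one (fun i _ => abs_nonneg _) fun i _ => ?_
    calc |f i (b (α i))| ≤ ‖f i‖ * ‖b (α i)‖ := (f i).le_opNorm _
      _ ≤ 1 * 1 := mul_le_mul (hf i) (hb1 _) (norm_nonneg _) zero_le_one
      _ = 1 := mul_one 1
  have hinj_ge : ∀ f : Fin (m+1) → (X →L[ℝ] ℝ), (∀ i, ‖f i‖ ≤ 1) →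
      |dualTensor (m+1) f z| ≤ injNorm (m+1) z :=
    fun f hf => le_csSup hbdd ⟨f, hf, rfl⟩
  have hinj_nonneg : 0 ≤ injNorm (m+1) z := by
    refine le_trans (abs_nonneg _) (hinj_ge (fun _ => 0) fun i => by simp)
  -- the grouped representation
  set y : (Fin m → Fin n) → X := fun β => ∑ t, c (Fin.cons t β : Fin (m+1) → Fin n) • b t with hy
  set w : (Fin m → Fin n) → (Fin (m+1) → X) :=
    fun β => Fin.cons (y β) (fun i => b (β i)) with hw
  have hcons : ∀ (t : Fin n) (β : Fin m → Fin n),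
      (Fin.cons (b t) (fun i => b (β i)) : Fin (m+1) → X)
        = fun i => b ((Fin.cons t β : Fin (m+1) → Fin n) i) := by
    intro t β; funext i
    refine Fin.cases ?_ ?_ i <;> simp
  have hwz : z = ∑ β : Fin m → Fin n, PiTensorProduct.tprod ℝ (w β) := by
    have hterm : ∀ β : Fin m → Fin n, PiTensorProduct.tprod ℝ (w β)
        = ∑ t : Fin n, c (Fin.cons t β : Fin (m+1) → Fin n) • PiTensorProduct.tprod ℝ
            (fun i => b ((Fin.cons t β : Fin (m+1) → Fin n) i)) := by
      intro β
      have h0 : w β = Function.update (Fin.cons 0 (fun i => b (β i))) 0 (y β) := by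
        rw [Fin.update_cons_zero]
      have hyβ : y β = ∑ t : Fin n, c (Fin.cons t β : Fin (m+1) → Fin n) • b t := rfl
      have hsum := MultilinearMap.map_update_sum
        (f := PiTensorProduct.tprod (s := fun _ : Fin (m+1) => X) ℝ)
        (Finset.univ : Finset (Fin n)) (0 : Fin (m+1))
        (fun t => c (Fin.cons t β : Fin (m+1) → Fin n) • b t)
        (Fin.cons 0 fun i => b (β i))
      rw [h0, hyβ, hsum]
      refine Finset.sum_congr rfl fun t _ => ?_
      rw [MultilinearMap.map_update_smul, Fin.update_cons_zero, hcons]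
    rw [hc]
    rw [show (Finset.univ : Finset (Fin (m+1) → Fin n)) = Finset.univ from rfl]
    rw [← (Fin.consEquiv (fun _ : Fin (m+1) => Fin n)).sum_comp
      (fun α => c α • PiTensorProduct.tprod ℝ (fun i => b (α i)))]
    rw [Fintype.sum_prod_type]
    rw [Finset.sum_comm]
    refine Finset.sum_congr rfl fun β _ => ?_
    rw [hterm β]
    rfl
  -- product bound for each pure tensor
  have hprod : ∀ β : Fin m → Fin n, (∏ i, ‖w β i‖) ≤ ‖y β‖ := by
    intro β
    rw [Fin.prod_univ_succ]
    have h0 : w β 0 = y β := rfl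
    have hsucc : ∀ i : Fin m, w β i.succ = b (β i) := fun i => rfl
    rw [h0]
    simp_rw [hsucc]
    refine mul_le_of_le_one_right (norm_nonneg _) ?_
    exact Finset.prod_le_one (fun i _ => norm_nonneg _) fun i _ => hb1 _
  -- each y β has norm at most injNorm z
  have hy_le : ∀ β : Fin m → Fin n, ‖y β‖ ≤ injNorm (m+1) z := by
    intro β
    obtain ⟨g, hg1, hg2⟩ := exists_dual_vector'' ℝ (y β)
    set f : Fin (m+1) → (X →L[ℝ] ℝ) := Fin.cons g (fun i => coordL (β i)) with hf0
    have hf : ∀ i, ‖f i‖ ≤ 1 := by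
      intro i
      refine Fin.cases ?_ ?_ i
      · simpa [hf0] using hg1
      · intro j; simpa [hf0] using hcoordL1 (β j)
    have hval : dualTensor (m+1) f z = g (y β) := by
      rw [hdual f]
      rw [← (Fin.consEquiv (fun _ : Fin (m+1) => Fin n)).sum_comp
        (fun α => c α * ∏ i, f i (b (α i)))]
      rw [Fintype.sum_prod_type]
      have hinner : ∀ t : Fin n, ∀ γ : Fin m → Fin n,
          c ((Fin.consEquiv (fun _ : Fin (m+1) => Fin n)) (t, γ))
            * ∏ i, f i (b ((Fin.consEquiv (fun _ : Fin (m+1) => Fin n)) (t, γ) i))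
          = c (Fin.cons t γ : Fin (m+1) → Fin n)
            * (g (b t) * ∏ i : Fin m, (if γ i = β i then (1:ℝ) else 0)) := by
        intro t γ
        have : (∏ i, f i (b ((Fin.consEquiv (fun _ : Fin (m+1) => Fin n)) (t, γ) i)))
            = g (b t) * ∏ i : Fin m, (if γ i = β i then (1:ℝ) else 0) := by
          rw [show (∏ i, f i (b ((Fin.consEquiv (fun _ : Fin (m+1) => Fin n)) (t, γ) i)))
            = ∏ i : Fin (m+1), f i (b ((Fin.cons t γ : Fin (m+1) → Fin n) i)) from rfl]
          rw [Fin.prod_univ_succ]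
          congr 1
          refine Finset.prod_congr rfl fun i _ => ?_
          show coordL (β i) (b (γ i)) = _
          rw [hcoordL_basis (β i) (γ i)]
        rw [this]
        rfl
      simp_rw [hinner]
      have hcollapse : ∀ t : Fin n,
          (∑ γ : Fin m → Fin n, c (Fin.cons t γ : Fin (m+1) → Fin n)
            * (g (b t) * ∏ i : Fin m, (if γ i = β i then (1:ℝ) else 0)))
          = c (Fin.cons t β : Fin (m+1) → Fin n) * g (b t) := by
        intro t
        rw [Finset.sum_eq_single β]
        · simp
        · intro γ _ hγ
          obtain ⟨i, hi⟩ := Function.ne_iff.mp hγ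
          rw [Finset.prod_eq_zero (Finset.mem_univ i) (by simp [hi])]
          ring
        · intro h; exact absurd (Finset.mem_univ β) h
      simp_rw [hcollapse]
      have : y β = ∑ t : Fin n, c (Fin.cons t β : Fin (m+1) → Fin n) • b t := rfl
      rw [this, _root_.map_sum]
      refine Finset.sum_congr rfl fun t _ => ?_
      rw [_root_.map_smul, smul_eq_mul]
    have : ‖y β‖ = dualTensor (m+1) f z := by rw [hval, hg2]; rfl
    rw [this]
    exact le_trans (le_abs_self _) (hinj_ge f hf)
  -- projNorm bound via the representation
  have hproj : projNorm (m+1) z ≤ ∑ β : Fin m → Fin n, ∏ i, ‖w β i‖ := by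
    set e := Fintype.equivFin (Fin m → Fin n) with he
    refine csInf_le ⟨0, ?_⟩ ?_
    · rintro r ⟨n', x, _, rfl⟩
      positivity
    · refine ⟨Fintype.card (Fin m → Fin n), fun j => w (e.symm j), ?_, ?_⟩
      · rw [hwz]
        exact (Equiv.sum_comp e.symm (fun β => PiTensorProduct.tprod ℝ (w β))).symm
      · exact (Equiv.sum_comp e.symm (fun β => ∏ i, ‖w β i‖)).symm
  refine le_trans hproj ?_
  calc (∑ β : Fin m → Fin n, ∏ i, ‖w β i‖)
      ≤ ∑ _β : Fin m → Fin n, injNorm (m+1) z :=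
        Finset.sum_le_sum fun β _ => le_trans (hprod β) (hy_le β)
    _ = (Fintype.card (Fin m → Fin n) : ℝ) * injNorm (m+1) z := by
        rw [Finset.sum_const, Finset.card_univ, nsmul_eq_mul]
    _ = (n:ℝ)^m * injNorm (m+1) z := by
        rw [Fintype.card_fun]
        push_cast
        simp

theorem rho_le_rpow [FiniteDimensional ℝ X] (n k : ℕ)
    (hn : Module.finrank ℝ X = n) (hk : 1 ≤ k) :
    (∀ z : ⨂[ℝ] _ : Fin k, X, projNorm k z ≤ (n : ℝ) ^ (k - 1) * injNorm k z) ∧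
      rho k X ≤ (n : ℝ) ^ ((1 : ℝ) - (k : ℝ)⁻¹) := by
  classical
  obtain ⟨m, rfl⟩ : ∃ m, k = m + 1 := ⟨k - 1, (Nat.succ_pred_eq_of_pos hk).symm⟩
  have hpart1 : ∀ z : ⨂[ℝ] _ : Fin (m+1), X,
      projNorm (m+1) z ≤ (n : ℝ) ^ (m + 1 - 1) * injNorm (m+1) z := by
    intro z
    simpa using main_ineq n m hn z
  refine ⟨hpart1, ?_⟩
  have hid : ∀ z : ⨂[ℝ] _ : Fin (m+1), X,
      tensorPow (m+1) (ContinuousLinearMap.id ℝ X) z = z := by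
    intro z
    show PiTensorProduct.map _ z = z
    have : (fun _ : Fin (m+1) => (ContinuousLinearMap.id ℝ X).toLinearMap)
        = fun _ : Fin (m+1) => (LinearMap.id : X →ₗ[ℝ] X) := rfl
    rw [this, PiTensorProduct.map_id]
    rfl
  have hproj0 : projNorm (m+1) (0 : ⨂[ℝ] _ : Fin (m+1), X) = 0 := by
    apply le_antisymm
    · refine csInf_le ⟨0, ?_⟩ ⟨0, fun j => Fin.elim0 j, by simp, by simp⟩
      rintro r ⟨n', x, _, rfl⟩
      positivity
    · refine le_csInf ⟨0, 0, fun j => Fin.elim0 j, by simp, by simp⟩ ?_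
      rintro r ⟨n', x, _, rfl⟩
      positivity
  have hinj0 : injNorm (m+1) (0 : ⨂[ℝ] _ : Fin (m+1), X) ≤ 1 := by
    refine csSup_le ⟨|dualTensor (m+1) (fun _ => 0) (0 : ⨂[ℝ] _ : Fin (m+1), X)|,
      ⟨fun _ => 0, fun i => by simp, rfl⟩⟩ ?_
    rintro r ⟨f, _, rfl⟩
    simp [_root_.map_zero]
  set S := { r | ∃ z : ⨂[ℝ] _ : Fin (m+1), X, injNorm (m+1) z ≤ 1 ∧
      r = projNorm (m+1) (tensorPow (m+1) (ContinuousLinearMap.id ℝ X) z) } with hS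
  have h0S : (0:ℝ) ∈ S := by
    refine ⟨0, hinj0, ?_⟩
    rw [_root_.map_zero, hproj0]
  have hub : ∀ r ∈ S, r ≤ (n:ℝ)^m := by
    rintro r ⟨z, hz, rfl⟩
    rw [hid z]
    calc projNorm (m+1) z ≤ (n : ℝ) ^ m * injNorm (m+1) z := by
          simpa using main_ineq n m hn z
      _ ≤ (n : ℝ) ^ m * 1 := mul_le_mul_of_nonneg_left hz (by positivity)
      _ = (n : ℝ) ^ m := mul_one _
  have hSbdd : BddAbove S := ⟨(n:ℝ)^m, hub⟩
  have hsup_le : sSup S ≤ (n:ℝ)^m := csSup_le ⟨0, h0S⟩ hub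
  have hsup_nonneg : (0:ℝ) ≤ sSup S := le_csSup hSbdd h0S
  show (sSup S) ^ (((m+1 : ℕ) : ℝ))⁻¹ ≤ (n : ℝ) ^ ((1 : ℝ) - ((m+1 : ℕ) : ℝ)⁻¹)
  have hcast : (0:ℝ) ≤ ((m+1:ℕ):ℝ)⁻¹ := by positivity
  calc (sSup S) ^ (((m+1 : ℕ) : ℝ))⁻¹ ≤ ((n:ℝ)^m) ^ (((m+1 : ℕ) : ℝ))⁻¹ :=
        Real.rpow_le_rpow hsup_nonneg hsup_le hcast
    _ = (n : ℝ) ^ ((1 : ℝ) - ((m+1 : ℕ) : ℝ)⁻¹) := by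
        rw [← Real.rpow_natCast (n:ℝ) m, ← Real.rpow_mul (Nat.cast_nonneg n)]
        congr 1
        have hne : ((m+1:ℕ):ℝ) ≠ 0 := by positivity
        push_cast
        field_simp
        ring
end
end

section
/- If X is an n-dimensional normed space whose John ellipsoid is ℰ and whose Loewner ellipsoid is αℰ for some α ≥ 1 (proportional ellipsoids), then α equals the Banach–Mazur distance d(X, ℓ₂^n). -/
open scoped TensorProduct BigOperators
open Filter MeasureTheory

noncomputable section

variable {X Y : Type*} [NormedAddCommGroup X] [NormedSpace ℝ X]
  [NormedAddCommGroup Y] [NormedSpace ℝ Y]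

open scoped Pointwise

/-- An ellipsoid in an `n`-dimensional space: linear image of the Euclidean unit ball. -/
def IsEllipsoid (n : ℕ) {X : Type*} [NormedAddCommGroup X] [NormedSpace ℝ X]
    (E : Set X) : Prop :=
  ∃ e : EuclideanSpace ℝ (Fin n) ≃ₗ[ℝ] X, E = e '' Metric.closedBall 0 1

/-- The John ellipsoid: the maximal-volume ellipsoid contained in the unit ball. -/
def IsJohnEllipsoid (n : ℕ) {X : Type*} [NormedAddCommGroup X] [NormedSpace ℝ X]
    (E : Set X) : Prop :=
  IsEllipsoid n E ∧ E ⊆ Metric.closedBall 0 1 ∧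
    ∀ F : Set X, IsEllipsoid n F → F ⊆ Metric.closedBall 0 1 →
      ∀ ψ : X ≃ₗ[ℝ] EuclideanSpace ℝ (Fin n),
        MeasureTheory.volume (ψ '' F) ≤ MeasureTheory.volume (ψ '' E)

/-- The Loewner ellipsoid: the minimal-volume ellipsoid containing the unit ball. -/
def IsLoewnerEllipsoid (n : ℕ) {X : Type*} [NormedAddCommGroup X] [NormedSpace ℝ X]
    (E : Set X) : Prop :=
  IsEllipsoid n E ∧ Metric.closedBall 0 1 ⊆ E ∧
    ∀ F : Set X, IsEllipsoid n F → Metric.closedBall 0 1 ⊆ F →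
      ∀ ψ : X ≃ₗ[ℝ] EuclideanSpace ℝ (Fin n),
        MeasureTheory.volume (ψ '' E) ≤ MeasureTheory.volume (ψ '' F)

theorem john_loewner_proportional_BMdist [FiniteDimensional ℝ X] (n : ℕ) (hn : 1 ≤ n)
    (hdim : Module.finrank ℝ X = n) (E : Set X) (α : ℝ) (hα : 1 ≤ α)
    (hJ : IsJohnEllipsoid n E) (hL : IsLoewnerEllipsoid n (α • E)) :
    α = BMdist X (EuclideanSpace ℝ (Fin n)) := by
  classical
  obtain ⟨⟨e, hE⟩, hEsub, hJmax⟩ := hJ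
  obtain ⟨-, hLsub, hLmin⟩ := hL
  have hα0 : (0:ℝ) < α := lt_of_lt_of_le one_pos hα
  have hfr : Module.finrank ℝ (EuclideanSpace ℝ (Fin n)) = n := finrank_euclideanSpace_fin
  haveI hnt : Nontrivial X := Module.nontrivial_of_finrank_pos (R := ℝ) (by omega : 0 < Module.finrank ℝ X)
  haveI hntE : Nontrivial (EuclideanSpace ℝ (Fin n)) :=
    Module.nontrivial_of_finrank_pos (R := ℝ) (by omega : 0 < Module.finrank ℝ (EuclideanSpace ℝ (Fin n)))
  set ψ : X ≃ₗ[ℝ] EuclideanSpace ℝ (Fin n) := e.symm with hψ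
  have hψE : ψ '' E = Metric.closedBall 0 1 := by
    rw [hE]
    exact e.toEquiv.symm_image_image _
  set V : ENNReal := MeasureTheory.volume (Metric.closedBall (0 : EuclideanSpace ℝ (Fin n)) 1)
    with hV
  have hV0 : V ≠ 0 := (Metric.measure_closedBall_pos _ _ one_pos).ne'
  have hVtop : V ≠ ⊤ := MeasureTheory.measure_closedBall_lt_top.ne
  -- key estimate: α ≤ ‖u‖ * ‖u.symm‖ for any equivalence u
  have key : ∀ u : X ≃L[ℝ] EuclideanSpace ℝ (Fin n),
      α ≤ ‖(u : X →L[ℝ] EuclideanSpace ℝ (Fin n))‖ * ‖(u.symm : EuclideanSpace ℝ (Fin n) →L[ℝ] X)‖ := by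
    intro u
    set a := ‖(u : X →L[ℝ] EuclideanSpace ℝ (Fin n))‖ with hadef
    set b := ‖(u.symm : EuclideanSpace ℝ (Fin n) →L[ℝ] X)‖ with hbdef
    have ha : 0 < a := by
      rw [hadef, norm_pos_iff]
      intro h
      obtain ⟨x, hx⟩ := exists_ne (0 : X)
      apply hx
      have hx0 : u x = 0 := by
        have : (u : X →L[ℝ] EuclideanSpace ℝ (Fin n)) x = 0 := by rw [h]; rfl
        exact this
      simpa using u.injective (hx0.trans (map_zero u).symm)
    have hb : 0 < b := by
      rw [hbdef, norm_pos_iff]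
      intro h
      obtain ⟨y, hy⟩ := exists_ne (0 : EuclideanSpace ℝ (Fin n))
      apply hy
      have hy0 : u.symm y = 0 := by
        have : (u.symm : EuclideanSpace ℝ (Fin n) →L[ℝ] X) y = 0 := by rw [h]; rfl
        exact this
      simpa using u.symm.injective (hy0.trans (map_zero u.symm).symm)
    set d := a * b with hddef
    have hd : 0 < d := mul_pos ha hb
    let sc : EuclideanSpace ℝ (Fin n) ≃ₗ[ℝ] EuclideanSpace ℝ (Fin n) :=
      LinearEquiv.smulOfNeZero ℝ _ b⁻¹ (inv_ne_zero hb.ne')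
    let ev : EuclideanSpace ℝ (Fin n) ≃ₗ[ℝ] X := sc.trans u.symm.toLinearEquiv
    have hev : ∀ y, ev y = u.symm (b⁻¹ • y) := fun y => rfl
    set F : Set X := ev '' Metric.closedBall 0 1 with hF
    have hFell : IsEllipsoid n F := ⟨ev, rfl⟩
    have hFsub : F ⊆ Metric.closedBall 0 1 := by
      rintro _ ⟨y, hy, rfl⟩
      rw [Metric.mem_closedBall, dist_zero_right] at hy ⊢
      rw [hev]
      calc ‖u.symm (b⁻¹ • y)‖ ≤ b * ‖b⁻¹ • y‖ :=
            (u.symm : EuclideanSpace ℝ (Fin n) →L[ℝ] X).le_opNorm _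
        _ = ‖y‖ := by
            rw [norm_smul, Real.norm_eq_abs, abs_of_pos (inv_pos.mpr hb)]
            field_simp
        _ ≤ 1 := hy
    have hdFell : IsEllipsoid n (d • F) := by
      refine ⟨ev.trans (LinearEquiv.smulOfNeZero ℝ X d hd.ne'), ?_⟩
      rw [hF, ← Set.image_smul, Set.image_image]
      rfl
    have hBsub : Metric.closedBall (0:X) 1 ⊆ d • F := by
      intro x hx
      rw [Metric.mem_closedBall, dist_zero_right] at hx
      rw [Set.mem_smul_set]
      refine ⟨ev (a⁻¹ • u x), ⟨a⁻¹ • u x, ?_, rfl⟩, ?_⟩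
      · rw [Metric.mem_closedBall, dist_zero_right, norm_smul, Real.norm_eq_abs,
          abs_of_pos (inv_pos.mpr ha)]
        have h1 : ‖u x‖ ≤ a * ‖x‖ := (u : X →L[ℝ] EuclideanSpace ℝ (Fin n)).le_opNorm x
        have h2 : a * ‖x‖ ≤ a := by nlinarith
        calc a⁻¹ * ‖u x‖ ≤ a⁻¹ * a := by
              apply mul_le_mul_of_nonneg_left (h1.trans h2) (inv_pos.mpr ha).le
          _ = 1 := inv_mul_cancel₀ ha.ne'
      · rw [hev, smul_smul]
        have h1 : u.symm ((b⁻¹ * a⁻¹) • u x) = (b⁻¹ * a⁻¹) • x := by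
          rw [_root_.map_smul, u.symm_apply_apply]
        rw [h1, smul_smul, hddef, ← mul_inv_rev, mul_inv_cancel₀ (mul_pos ha hb).ne', one_smul]
    -- volume comparison
    have hJohn := hJmax F hFell hFsub ψ
    have hLoew := hLmin (d • F) hdFell hBsub ψ
    have hαE : ψ '' (α • E) = α • (ψ '' E) := image_smul_set ψ.toLinearMap α E
    have hdF2 : ψ '' (d • F) = d • (ψ '' F) := image_smul_set ψ.toLinearMap d F
    rw [hαE, hdF2, hψE] at hLoew
    rw [MeasureTheory.Measure.addHaar_smul_of_nonneg _ hα0.le,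
        MeasureTheory.Measure.addHaar_smul_of_nonneg _ hd.le, hfr] at hLoew
    rw [hψE] at hJohn
    have hfin : MeasureTheory.volume (ψ '' F) ≤ V := hJohn
    have hchain : ENNReal.ofReal (α ^ n) * V ≤ ENNReal.ofReal (d ^ n) * V := by
      calc ENNReal.ofReal (α ^ n) * V ≤ ENNReal.ofReal (d ^ n) * MeasureTheory.volume (ψ '' F) :=
            hLoew
        _ ≤ ENNReal.ofReal (d ^ n) * V := by
            exact mul_le_mul_right hfin _
    have := (ENNReal.mul_le_mul_iff_left hV0 hVtop).mp hchain
    have hpow : α ^ n ≤ d ^ n := by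
      have := (ENNReal.ofReal_le_ofReal_iff (by positivity)).mp this
      exact this
    exact (pow_le_pow_iff_left₀ hα0.le hd.le (by omega)).mp hpow
  -- now the two inequalities
  rw [BMdist]
  set S := { r | ∃ u : X ≃L[ℝ] EuclideanSpace ℝ (Fin n),
    r = ‖(u : X →L[ℝ] EuclideanSpace ℝ (Fin n))‖ * ‖(u.symm : EuclideanSpace ℝ (Fin n) →L[ℝ] X)‖ }
    with hS
  -- the equivalence coming from the John ellipsoid
  let ec : EuclideanSpace ℝ (Fin n) ≃L[ℝ] X := e.toContinuousLinearEquiv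
  have hec_app : ∀ y, ec y = e y := fun y => rfl
  have hecs_app : ∀ x, ec.symm x = e.symm x := fun x => rfl
  have hnorm1 : ‖(ec : EuclideanSpace ℝ (Fin n) →L[ℝ] X)‖ ≤ 1 := by
    apply ContinuousLinearMap.opNorm_le_bound _ zero_le_one
    intro y
    rw [one_mul]
    rcases eq_or_ne y 0 with rfl | hy
    · simp
    · have hyn : 0 < ‖y‖ := norm_pos_iff.mpr hy
      have hmem : e (‖y‖⁻¹ • y) ∈ E := by
        rw [hE]
        exact ⟨‖y‖⁻¹ • y, by
          rw [Metric.mem_closedBall, dist_zero_right, norm_smul, Real.norm_eq_abs,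
            abs_of_pos (inv_pos.mpr hyn), inv_mul_cancel₀ hyn.ne'], rfl⟩
      have := hEsub hmem
      rw [Metric.mem_closedBall, dist_zero_right, _root_.map_smul, norm_smul, Real.norm_eq_abs,
        abs_of_pos (inv_pos.mpr hyn)] at this
      show ‖e y‖ ≤ ‖y‖
      nlinarith [mul_le_mul_of_nonneg_left this hyn.le, mul_inv_cancel₀ hyn.ne']
  have hnorm2 : ‖(ec.symm : X →L[ℝ] EuclideanSpace ℝ (Fin n))‖ ≤ α := by
    apply ContinuousLinearMap.opNorm_le_bound _ hα0.le
    intro x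
    rcases eq_or_ne x 0 with rfl | hx
    · simp
    · have hxn : 0 < ‖x‖ := norm_pos_iff.mpr hx
      have hmem : (‖x‖⁻¹ • x) ∈ α • E := by
        apply hLsub
        rw [Metric.mem_closedBall, dist_zero_right, norm_smul, Real.norm_eq_abs,
          abs_of_pos (inv_pos.mpr hxn), inv_mul_cancel₀ hxn.ne']
      obtain ⟨z, hz, hzz⟩ := Set.mem_smul_set.mp hmem
      rw [hE] at hz
      obtain ⟨y, hy, rfl⟩ := hz
      rw [Metric.mem_closedBall, dist_zero_right] at hy
      -- ‖x‖⁻¹ • x = α • e y, so e.symm (‖x‖⁻¹ • x) = α • y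
      have hsymm : e.symm (‖x‖⁻¹ • x) = α • y := by
        rw [← hzz, _root_.map_smul, e.symm_apply_apply]
      have : ‖x‖⁻¹ * ‖e.symm x‖ ≤ α := by
        have h1 : ‖e.symm (‖x‖⁻¹ • x)‖ = α * ‖y‖ := by
          rw [hsymm, norm_smul, Real.norm_eq_abs, abs_of_pos hα0]
        rw [_root_.map_smul, norm_smul, Real.norm_eq_abs, abs_of_pos (inv_pos.mpr hxn)] at h1
        rw [h1]
        nlinarith
      show ‖e.symm x‖ ≤ α * ‖x‖
      calc ‖e.symm x‖ = ‖x‖ * (‖x‖⁻¹ * ‖e.symm x‖) := by field_simp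
        _ ≤ ‖x‖ * α := by nlinarith
        _ = α * ‖x‖ := mul_comm _ _
  have hmem : (‖(ec.symm : X →L[ℝ] EuclideanSpace ℝ (Fin n))‖ *
      ‖((ec.symm).symm : EuclideanSpace ℝ (Fin n) →L[ℝ] X)‖) ∈ S := ⟨ec.symm, rfl⟩
  have hbdd : BddBelow S := ⟨0, by rintro r ⟨u, rfl⟩; positivity⟩
  apply le_antisymm
  · apply le_csInf ⟨_, hmem⟩
    rintro r ⟨u, rfl⟩
    exact key u
  · apply (csInf_le hbdd hmem).trans
    have : ‖((ec.symm).symm : EuclideanSpace ℝ (Fin n) →L[ℝ] X)‖ =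
        ‖(ec : EuclideanSpace ℝ (Fin n) →L[ℝ] X)‖ := by rw [ContinuousLinearEquiv.symm_symm]
    rw [this]
    calc ‖(ec.symm : X →L[ℝ] EuclideanSpace ℝ (Fin n))‖ *
          ‖(ec : EuclideanSpace ℝ (Fin n) →L[ℝ] X)‖ ≤ α * 1 :=
        mul_le_mul hnorm2 hnorm1 (norm_nonneg _) hα0.le
      _ = α := mul_one α

end
end

section
/- Let H : ℓ_∞² → ℓ₁² be the normalized Hadamard matrix (1/2)[[1,1],[1,−1]] over the reals. Then τ_k(H) ≤ √2 for every k, τ_{2p}(H) = √2 for all even indices, τ_k(H) < √2 for odd k, and τ_∞(H) = √2, which is strictly less than ‖H‖_{N(ℓ_∞²→ℓ₁²)} = 2. -/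
open scoped TensorProduct BigOperators
open Filter MeasureTheory
set_option linter.unusedSectionVars false
set_option maxHeartbeats 1000000

noncomputable section

variable {X Y : Type*} [NormedAddCommGroup X] [NormedSpace ℝ X]
  [NormedAddCommGroup Y] [NormedSpace ℝ Y]

/-- The normalized Hadamard matrix `(1/2)[[1,1],[1,-1]]` as an operator `ℓ_∞² → ℓ₁²`. -/
def hadamardOp : (PiLp ⊤ fun _ : Fin 2 => ℝ) →L[ℝ] (PiLp 1 fun _ : Fin 2 => ℝ) :=
  LinearMap.toContinuousLinearMap
    ((WithLp.linearEquiv 1 ℝ (Fin 2 → ℝ)).symm.toLinearMap ∘ₗ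
      Matrix.toLin' !![(1 : ℝ)/2, 1/2; 1/2, -(1/2)] ∘ₗ
      (WithLp.linearEquiv ⊤ ℝ (Fin 2 → ℝ)).toLinearMap)

namespace HadAux

abbrev Sp (q : ENNReal) := PiLp q (fun _ : Fin 2 => ℝ)

variable (q : ENNReal) [Fact (1 ≤ q)]

def bv (u : Fin 2) : Sp q := (WithLp.equiv q _).symm (Pi.single u 1)

def ev (u : Fin 2) : Sp q →ₗ[ℝ] ℝ where
  toFun v := v u
  map_add' _ _ := rfl
  map_smul' _ _ := rfl

@[simp] lemma ev_apply (u : Fin 2) (v : Sp q) : ev q u v = v u := rfl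

lemma bv_apply (u t : Fin 2) : bv q u t = if t = u then 1 else 0 := by
  simp [bv, WithLp.equiv_symm_apply, Pi.single_apply]

lemma decomp (v : Sp q) : v = ∑ u, v u • bv q u := by
  ext t
  simp only [WithLp.ofLp_sum, Finset.sum_apply, PiLp.smul_apply, smul_eq_mul, bv_apply, Fin.sum_univ_two]
  fin_cases t <;> simp [bv_apply]

variable (k : ℕ)

def bT (s : Fin k → Fin 2) : ⨂[ℝ] _ : Fin k, Sp q :=
  PiTensorProduct.tprod ℝ (fun i => bv q (s i))

def coef (s : Fin k → Fin 2) : (⨂[ℝ] _ : Fin k, Sp q) →ₗ[ℝ] ℝ :=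
  PiTensorProduct.lift ((MultilinearMap.mkPiAlgebra ℝ (Fin k) ℝ).compLinearMap
    (fun i => ev q (s i)))

@[simp] lemma coef_tprod (s : Fin k → Fin 2) (y : Fin k → Sp q) :
    coef q k s (PiTensorProduct.tprod ℝ y) = ∏ i, y i (s i) := by
  simp [coef]

lemma prod_delta (s s' : Fin k → Fin 2) :
    (∏ i, if s i = s' i then (1:ℝ) else 0) = if s' = s then 1 else 0 := by
  by_cases h : s' = s
  · subst h; simp
  · rw [if_neg h]
    obtain ⟨i, hi⟩ := Function.ne_iff.1 h
    exact Finset.prod_eq_zero (Finset.mem_univ i) (if_neg (fun hh => hi hh.symm))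

@[simp] lemma coef_bT (s s' : Fin k → Fin 2) :
    coef q k s (bT q k s') = if s' = s then 1 else 0 := by
  rw [bT, coef_tprod]
  simp only [bv_apply]
  exact prod_delta k s s'

lemma decompT (z : ⨂[ℝ] _ : Fin k, Sp q) :
    z = ∑ s : Fin k → Fin 2, coef q k s z • bT q k s := by
  have : (LinearMap.id : (⨂[ℝ] _ : Fin k, Sp q) →ₗ[ℝ] _)
      = ∑ s : Fin k → Fin 2, LinearMap.smulRight (coef q k s) (bT q k s) := by
    apply PiTensorProduct.ext
    apply MultilinearMap.ext
    intro y
    simp only [LinearMap.compMultilinearMap_apply, LinearMap.id_coe, id_eq,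
      LinearMap.coe_sum, Finset.sum_apply, LinearMap.smulRight_apply, coef_tprod]
    conv_lhs => rw [show (PiTensorProduct.tprod ℝ) y
      = (PiTensorProduct.tprod ℝ) (fun i => ∑ u, y i u • bv q u) by
        exact congrArg _ (funext fun i => decomp q (y i))]
    rw [MultilinearMap.map_sum]
    refine Finset.sum_congr rfl (fun s _ => ?_)
    rw [MultilinearMap.map_smul_univ]
    rfl
  conv_lhs => rw [← LinearMap.id_apply (R := ℝ) z, this]
  simp

lemma dualTensor_apply (f : Fin k → (Sp q →L[ℝ] ℝ)) (z : ⨂[ℝ] _ : Fin k, Sp q) :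
    dualTensor k f z = ∑ s : Fin k → Fin 2, coef q k s z * ∏ i, f i (bv q (s i)) := by
  conv_lhs => rw [decompT q k z]
  rw [map_sum]
  refine Finset.sum_congr rfl (fun s _ => ?_)
  rw [LinearMap.map_smul, smul_eq_mul]
  congr 1
  simp [dualTensor, bT]

end HadAux

/-! ## Norm lemmas -/

namespace HadAux

lemma norm_inf_le (v : Sp ⊤) (m : ℝ) (h : ∀ t, |v t| ≤ m) : ‖v‖ ≤ m := by
  rw [PiLp.norm_eq_ciSup]
  exact ciSup_le (fun t => by simpa using h t)

lemma abs_apply_le_norm_inf (v : Sp ⊤) (t : Fin 2) : |v t| ≤ ‖v‖ := by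
  rw [PiLp.norm_eq_ciSup]
  exact le_ciSup (f := fun t => ‖v t‖) (Set.Finite.bddAbove (Set.finite_range _)) t

lemma norm_one_eq (v : Sp 1) : ‖v‖ = ∑ t, |v t| := by
  rw [PiLp.norm_eq_sum (by norm_num)]
  simp [Real.norm_eq_abs]

lemma norm_bv_inf_le : ∀ u, ‖bv ⊤ u‖ ≤ 1 := fun u =>
  norm_inf_le _ _ (fun t => by rw [bv_apply]; split <;> norm_num)

lemma norm_bv_one (u : Fin 2) : ‖bv 1 u‖ = 1 := by
  rw [norm_one_eq]
  simp only [bv_apply]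
  fin_cases u <;> simp [Fin.sum_univ_two]

/-- coordinate functional CLM on `ℓ∞²`, of norm at most 1 -/
def evC (u : Fin 2) : Sp ⊤ →L[ℝ] ℝ :=
  LinearMap.mkContinuous (ev ⊤ u) 1 (fun v => by
    simpa using abs_apply_le_norm_inf v u)

@[simp] lemma evC_apply (u : Fin 2) (v : Sp ⊤) : evC u v = v u := rfl

lemma norm_evC_le (u : Fin 2) : ‖evC u‖ ≤ 1 :=
  LinearMap.mkContinuous_norm_le _ zero_le_one _

/-- For a functional of norm ≤ 1 on `ℓ∞²`, the `ℓ₁` sum of coefficients is ≤ 1. -/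
lemma sum_abs_apply_le (g : Sp ⊤ →L[ℝ] ℝ) (hg : ‖g‖ ≤ 1) : ∑ u, |g (bv ⊤ u)| ≤ 1 := by
  set w : Sp ⊤ := ∑ u, (if g (bv ⊤ u) < 0 then (-1:ℝ) else 1) • bv ⊤ u with hw
  have habs : ∀ u, |g (bv ⊤ u)| = (if g (bv ⊤ u) < 0 then (-1:ℝ) else 1) * g (bv ⊤ u) := by
    intro u; split <;> rename_i h
    · rw [abs_of_neg h]; ring
    · rw [abs_of_nonneg (not_lt.1 h)]; ring
  calc ∑ u, |g (bv ⊤ u)|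
      = g w := by
        rw [hw, map_sum]
        exact Finset.sum_congr rfl (fun u _ => by
          rw [habs u, ContinuousLinearMap.map_smul, smul_eq_mul])
    _ ≤ |g w| := le_abs_self _
    _ ≤ ‖g‖ * ‖w‖ := g.le_opNorm w
    _ ≤ 1 * 1 := by
        refine mul_le_mul hg (norm_inf_le _ _ (fun t => ?_)) (norm_nonneg _) zero_le_one
        rw [hw]
        simp only [Fin.sum_univ_two, PiLp.add_apply, PiLp.smul_apply, smul_eq_mul]
        refine le_trans (abs_add_le _ _) ?_
        rw [abs_mul, abs_mul]
        have hε : ∀ u, |(if g (bv ⊤ u) < 0 then (-1:ℝ) else 1)| = 1 := fun u => by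
          split <;> norm_num
        rw [hε, hε]
        simp only [one_mul, bv_apply]
        fin_cases t <;> norm_num
    _ = 1 := mul_one 1

variable (k : ℕ)

/-! ## injNorm -/

lemma dualTensor_zero_fun (z : ⨂[ℝ] _ : Fin k, Sp ⊤) (hk : 1 ≤ k) :
    dualTensor k (fun _ => (0 : Sp ⊤ →L[ℝ] ℝ)) z = 0 := by
  rw [dualTensor_apply]
  refine Finset.sum_eq_zero (fun s _ => ?_)
  rw [Finset.prod_eq_zero (Finset.mem_univ (⟨0, hk⟩ : Fin k)) (by simp)]
  ring

lemma injNorm_bddAbove (z : ⨂[ℝ] _ : Fin k, Sp ⊤) :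
    ∀ r ∈ { r | ∃ f : Fin k → (Sp ⊤ →L[ℝ] ℝ), (∀ i, ‖f i‖ ≤ 1) ∧ r = |dualTensor k f z| },
      r ≤ ∑ s : Fin k → Fin 2, |coef ⊤ k s z| := by
  rintro r ⟨f, hf, rfl⟩
  rw [dualTensor_apply]
  refine le_trans (Finset.abs_sum_le_sum_abs _ _) (Finset.sum_le_sum (fun s _ => ?_))
  rw [abs_mul]
  have : |∏ i, f i (bv ⊤ (s i))| ≤ 1 := by
    rw [Finset.abs_prod]
    refine Finset.prod_le_one (fun i _ => abs_nonneg _) (fun i _ => ?_)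
    calc |f i (bv ⊤ (s i))| ≤ ‖f i‖ * ‖bv ⊤ (s i)‖ := (f i).le_opNorm _
      _ ≤ 1 * 1 := mul_le_mul (hf i) (norm_bv_inf_le _) (norm_nonneg _) zero_le_one
      _ = 1 := mul_one 1
  calc |coef ⊤ k s z| * |∏ i, f i (bv ⊤ (s i))| ≤ |coef ⊤ k s z| * 1 :=
        mul_le_mul_of_nonneg_left this (abs_nonneg _)
    _ = |coef ⊤ k s z| := mul_one _

lemma abs_coef_le_injNorm (hk : 1 ≤ k) (z : ⨂[ℝ] _ : Fin k, Sp ⊤) (s : Fin k → Fin 2) :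
    |coef ⊤ k s z| ≤ injNorm k z := by
  refine le_csSup ⟨_, injNorm_bddAbove k z⟩ ⟨fun i => evC (s i), fun i => norm_evC_le _, ?_⟩
  have : dualTensor k (fun i => evC (s i)) z = coef ⊤ k s z := by
    rw [dualTensor_apply]
    have h1 : ∀ s' : Fin k → Fin 2, coef ⊤ k s' z * ∏ i, evC (s i) (bv ⊤ (s' i))
        = coef ⊤ k s' z * if s' = s then 1 else 0 := by
      intro s'
      congr 1
      simpa only [evC_apply, bv_apply] using prod_delta k s s'
    rw [Finset.sum_congr rfl (fun s' _ => h1 s')]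
    simp only [mul_ite, mul_one, mul_zero, Finset.sum_ite_eq', Finset.mem_univ, if_true]
  rw [this]

lemma injNorm_le_one (hk : 1 ≤ k) (z : ⨂[ℝ] _ : Fin k, Sp ⊤)
    (h : ∀ s, |coef ⊤ k s z| ≤ 1) : injNorm k z ≤ 1 := by
  refine csSup_le ⟨|dualTensor k (fun _ => (0 : Sp ⊤ →L[ℝ] ℝ)) z|,
    fun _ => (0 : Sp ⊤ →L[ℝ] ℝ), fun i => by simp, rfl⟩ ?_
  rintro r ⟨f, hf, rfl⟩
  rw [dualTensor_apply]
  calc |∑ s : Fin k → Fin 2, coef ⊤ k s z * ∏ i, f i (bv ⊤ (s i))|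
      ≤ ∑ s : Fin k → Fin 2, |coef ⊤ k s z| * |∏ i, f i (bv ⊤ (s i))| := by
        refine le_trans (Finset.abs_sum_le_sum_abs _ _) (le_of_eq ?_)
        exact Finset.sum_congr rfl (fun s _ => abs_mul _ _)
    _ ≤ ∑ s : Fin k → Fin 2, ∏ i, |f i (bv ⊤ (s i))| := by
        refine Finset.sum_le_sum (fun s _ => ?_)
        rw [← Finset.abs_prod]
        refine mul_le_of_le_one_left (abs_nonneg _) (h s)
    _ = ∏ i, ∑ u, |f i (bv ⊤ u)| := (Fintype.prod_sum (fun i (u : Fin 2) => |f i (bv ⊤ u)|)).symm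
    _ ≤ 1 := Finset.prod_le_one (fun i _ => Finset.sum_nonneg (fun u _ => abs_nonneg _))
        (fun i _ => sum_abs_apply_le (f i) (hf i))

/-! ## projNorm -/

lemma projNorm_set_nonneg (z : ⨂[ℝ] _ : Fin k, Sp 1) :
    ∀ r ∈ { r | ∃ (n : ℕ) (x : Fin n → Fin k → Sp 1),
      z = ∑ j, PiTensorProduct.tprod ℝ (x j) ∧ r = ∑ j, ∏ i, ‖x j i‖ }, 0 ≤ r := by
  rintro r ⟨n, x, -, rfl⟩
  exact Finset.sum_nonneg fun j _ => Finset.prod_nonneg fun i _ => norm_nonneg _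

lemma projNorm_mem (hk : 1 ≤ k) (z : ⨂[ℝ] _ : Fin k, Sp 1) :
    (∑ s : Fin k → Fin 2, |coef 1 k s z|) ∈ { r | ∃ (n : ℕ) (x : Fin n → Fin k → Sp 1),
      z = ∑ j, PiTensorProduct.tprod ℝ (x j) ∧ r = ∑ j, ∏ i, ‖x j i‖ } := by
  classical
  set e := (Fintype.equivFin (Fin k → Fin 2))
  set i0 : Fin k := ⟨0, hk⟩
  refine ⟨Fintype.card (Fin k → Fin 2), fun j => Function.update
    (fun i => bv 1 (e.symm j i)) i0 (coef 1 k (e.symm j) z • bv 1 (e.symm j i0)), ?_, ?_⟩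
  · have hterm : ∀ j, PiTensorProduct.tprod ℝ (Function.update
        (fun i => bv 1 (e.symm j i)) i0 (coef 1 k (e.symm j) z • bv 1 (e.symm j i0)))
        = coef 1 k (e.symm j) z • bT 1 k (e.symm j) := by
      intro j
      rw [MultilinearMap.map_update_smul]
      congr 1
      rw [Function.update_eq_self]
      rfl
    rw [Finset.sum_congr rfl (fun j _ => hterm j)]
    rw [Equiv.sum_comp e.symm (fun s => coef 1 k s z • bT 1 k s)]
    exact decompT 1 k z
  · rw [← Equiv.sum_comp e.symm (fun s => |coef 1 k s z|)]
    refine Finset.sum_congr rfl (fun j _ => ?_)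
    dsimp only
    rw [Finset.prod_congr rfl (fun i _ => Function.apply_update (fun _ (v : Sp 1) => ‖v‖) _ i0 _ i)]
    rw [Finset.prod_update_of_mem (Finset.mem_univ i0)]
    simp only [norm_smul, Real.norm_eq_abs, norm_bv_one]
    simp

lemma projNorm_eq (hk : 1 ≤ k) (z : ⨂[ℝ] _ : Fin k, Sp 1) :
    projNorm k z = ∑ s : Fin k → Fin 2, |coef 1 k s z| := by
  refine le_antisymm (csInf_le ⟨0, projNorm_set_nonneg k z⟩ (projNorm_mem k hk z)) ?_
  refine le_csInf ⟨_, projNorm_mem k hk z⟩ ?_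
  rintro r ⟨n, x, rfl, rfl⟩
  calc ∑ s : Fin k → Fin 2, |coef 1 k s (∑ j, PiTensorProduct.tprod ℝ (x j))|
      = ∑ s : Fin k → Fin 2, |∑ j, ∏ i, x j i (s i)| := by
        refine Finset.sum_congr rfl (fun s _ => ?_)
        rw [map_sum]
        exact congrArg _ (Finset.sum_congr rfl (fun j _ => coef_tprod 1 k s (x j)))
    _ ≤ ∑ s : Fin k → Fin 2, ∑ j, ∏ i, |x j i (s i)| := by
        refine Finset.sum_le_sum (fun s _ => ?_)
        refine le_trans (Finset.abs_sum_le_sum_abs _ _) (Finset.sum_le_sum (fun j _ => ?_))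
        rw [Finset.abs_prod]
    _ = ∑ j, ∑ s : Fin k → Fin 2, ∏ i, |x j i (s i)| := Finset.sum_comm
    _ = ∑ j, ∏ i, ‖x j i‖ := by
        refine Finset.sum_congr rfl (fun j _ => ?_)
        exact (Fintype.prod_sum (fun i (u : Fin 2) => |x j i u|)).symm.trans
          (Finset.prod_congr rfl (fun i _ => (norm_one_eq (x j i)).symm))

end HadAux

/-! ## Hadamard action -/

namespace HadAux

def Hm (a b : Fin 2) : ℝ := if a = 1 ∧ b = 1 then -(1/2) else 1/2

lemma had_coord (v : Sp ⊤) (t : Fin 2) :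
    hadamardOp v t = Hm t 0 * v 0 + Hm t 1 * v 1 := by
  show (Matrix.toLin' !![(1 : ℝ)/2, 1/2; 1/2, -(1/2)] (WithLp.equiv ⊤ _ v)) t = _
  rw [Matrix.toLin'_apply]
  fin_cases t <;>
    simp [Matrix.mulVec, dotProduct, Fin.sum_univ_two, Hm] <;> ring

lemma had_bv (u : Fin 2) : hadamardOp (bv ⊤ u) = ∑ w, Hm w u • bv 1 w := by
  ext t
  rw [had_coord]
  simp only [WithLp.ofLp_sum, Fin.sum_univ_two, PiLp.add_apply, PiLp.smul_apply, smul_eq_mul, bv_apply]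
  fin_cases u <;> fin_cases t <;> simp [Hm]

variable (k : ℕ)

lemma tensorPow_bT (s : Fin k → Fin 2) :
    tensorPow k hadamardOp (bT ⊤ k s)
      = ∑ t : Fin k → Fin 2, (∏ i, Hm (t i) (s i)) • bT 1 k t := by
  rw [tensorPow, bT, PiTensorProduct.map_tprod]
  have h1 : (fun i => (hadamardOp.toLinearMap) (bv ⊤ (s i)))
      = fun i => ∑ w, Hm w (s i) • bv 1 w := by
    funext i
    exact had_bv (s i)
  rw [h1]
  rw [MultilinearMap.map_sum (PiTensorProduct.tprod ℝ) (fun i w => Hm w (s i) • bv 1 w)]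
  refine Finset.sum_congr rfl (fun t _ => ?_)
  rw [MultilinearMap.map_smul_univ]
  rfl

lemma coef_tensorPow (z : ⨂[ℝ] _ : Fin k, Sp ⊤) (t : Fin k → Fin 2) :
    coef 1 k t (tensorPow k hadamardOp z)
      = ∑ s : Fin k → Fin 2, (∏ i, Hm (t i) (s i)) * coef ⊤ k s z := by
  conv_lhs => rw [decompT ⊤ k z]
  rw [map_sum, map_sum]
  rw [Finset.sum_congr rfl (fun s (_ : s ∈ Finset.univ) => by
    rw [LinearMap.map_smul, LinearMap.map_smul, tensorPow_bT k s] :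
      ∀ s ∈ Finset.univ, coef 1 k t (tensorPow k hadamardOp (coef ⊤ k s z • bT ⊤ k s))
        = coef ⊤ k s z • coef 1 k t (∑ t' : Fin k → Fin 2, (∏ i, Hm (t' i) (s i)) • bT 1 k t'))]
  refine Finset.sum_congr rfl (fun s _ => ?_)
  rw [map_sum]
  rw [Finset.sum_congr rfl (fun t' _ => by rw [LinearMap.map_smul])]
  simp only [coef_bT, smul_eq_mul, mul_ite, mul_one, mul_zero,
    Finset.sum_ite_eq', Finset.mem_univ, if_true, smul_eq_mul]
  ring

end HadAux

/-! ## Combinatorics of the Hadamard tensor powers -/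

namespace HadAux

variable (k : ℕ)

def HkM (t s : Fin k → Fin 2) : ℝ := ∏ i, Hm (t i) (s i)

lemma Hm_orth (a b : Fin 2) : ∑ u, Hm a u * Hm b u = if a = b then 1/2 else 0 := by
  fin_cases a <;> fin_cases b <;> norm_num [Hm, Fin.sum_univ_two]

lemma HkM_orth (t t' : Fin k → Fin 2) :
    ∑ s : Fin k → Fin 2, HkM k t s * HkM k t' s = if t = t' then (1/2)^k else 0 := by
  have h1 : ∀ s : Fin k → Fin 2, HkM k t s * HkM k t' s
      = ∏ i, (Hm (t i) (s i) * Hm (t' i) (s i)) := fun s => (Finset.prod_mul_distrib).symm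
  rw [Finset.sum_congr rfl (fun s _ => h1 s),
    ← Fintype.prod_sum (fun i (u : Fin 2) => Hm (t i) u * Hm (t' i) u),
    Finset.prod_congr rfl (fun i _ => Hm_orth (t i) (t' i))]
  by_cases h : t = t'
  · subst h; simp
  · rw [if_neg h]
    obtain ⟨i, hi⟩ := Function.ne_iff.1 h
    exact Finset.prod_eq_zero (Finset.mem_univ i) (if_neg hi)

lemma card_S : (Finset.univ : Finset (Fin k → Fin 2)).card = 2 ^ k := by
  simp [Fintype.card_fun]

lemma sum_sq_w (σ : (Fin k → Fin 2) → ℝ) (hσ : ∀ t, |σ t| ≤ 1) :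
    ∑ s : Fin k → Fin 2, (∑ t : Fin k → Fin 2, HkM k t s * σ t)^2 ≤ 1 := by
  have expand : ∀ s : Fin k → Fin 2, (∑ t, HkM k t s * σ t)^2
      = ∑ t, ∑ t', (σ t * σ t') * (HkM k t s * HkM k t' s) := by
    intro s
    rw [sq, Finset.sum_mul_sum]
    exact Finset.sum_congr rfl (fun t _ => Finset.sum_congr rfl (fun t' _ => by ring))
  calc ∑ s : Fin k → Fin 2, (∑ t, HkM k t s * σ t)^2
      = ∑ t : Fin k → Fin 2, ∑ t' : Fin k → Fin 2, (σ t * σ t')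
          * ∑ s : Fin k → Fin 2, (HkM k t s * HkM k t' s) := by
        rw [Finset.sum_congr rfl (fun s _ => expand s), Finset.sum_comm]
        refine Finset.sum_congr rfl (fun t _ => ?_)
        rw [Finset.sum_comm]
        exact Finset.sum_congr rfl (fun t' _ => (Finset.mul_sum _ _ _).symm)
    _ = ∑ t : Fin k → Fin 2, σ t^2 * (1/2)^k := by
        refine Finset.sum_congr rfl (fun t _ => ?_)
        rw [Finset.sum_congr rfl (fun t' _ => by rw [HkM_orth])]
        simp only [mul_ite, mul_zero, Finset.sum_ite_eq, Finset.sum_ite_eq',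
          Finset.mem_univ, if_true]
        ring
    _ ≤ ∑ _t : Fin k → Fin 2, 1 * (1/2)^k := by
        refine Finset.sum_le_sum (fun t _ => ?_)
        have : σ t ^ 2 ≤ 1 := by
          have h1 := hσ t
          have h2 := abs_nonneg (σ t)
          nlinarith [sq_abs (σ t)]
        exact mul_le_mul_of_nonneg_right this (by positivity)
    _ = 1 := by
        rw [Finset.sum_const, card_S, nsmul_eq_mul, one_mul]
        push_cast
        rw [one_div, inv_pow, mul_inv_cancel₀ (by positivity)]

lemma sqrt_two_pow_sq : (Real.sqrt 2 ^ k) ^ 2 = 2 ^ k := by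
  rw [← pow_mul, mul_comm k 2, pow_mul, Real.sq_sqrt (by norm_num)]

lemma cs_bound (σ : (Fin k → Fin 2) → ℝ) (hσ : ∀ t, |σ t| ≤ 1) :
    ∑ s : Fin k → Fin 2, |∑ t : Fin k → Fin 2, HkM k t s * σ t| ≤ Real.sqrt 2 ^ k := by
  set S1 := ∑ s : Fin k → Fin 2, |∑ t, HkM k t s * σ t| with hS1
  have h2 : S1^2 ≤ 2^k := by
    have hcs := Finset.sum_mul_sq_le_sq_mul_sq Finset.univ (fun _ => (1:ℝ))
      (fun s : Fin k → Fin 2 => |∑ t, HkM k t s * σ t|)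
    simp only [one_mul, one_pow] at hcs
    calc S1^2 ≤ (∑ _s : Fin k → Fin 2, (1:ℝ)) * ∑ s : Fin k → Fin 2, |∑ t, HkM k t s * σ t|^2 := hcs
      _ = 2^k * ∑ s : Fin k → Fin 2, (∑ t, HkM k t s * σ t)^2 := by
          rw [Finset.sum_const, card_S, nsmul_eq_mul, mul_one]
          push_cast
          rw [Finset.sum_congr rfl (fun s _ => sq_abs _)]
      _ ≤ 2^k * 1 := mul_le_mul_of_nonneg_left (sum_sq_w k σ hσ) (by positivity)
      _ = 2^k := mul_one _
  have hS1p : 0 ≤ S1 := Finset.sum_nonneg (fun s _ => abs_nonneg _)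
  calc S1 = Real.sqrt (S1^2) := (Real.sqrt_sq hS1p).symm
    _ ≤ Real.sqrt (2^k) := Real.sqrt_le_sqrt h2
    _ = Real.sqrt 2 ^ k := by
        rw [← sqrt_two_pow_sq k, Real.sqrt_sq (by positivity)]

lemma w_int (σ : (Fin k → Fin 2) → ℝ) (hσ : ∀ t, σ t = 1 ∨ σ t = -1)
    (s : Fin k → Fin 2) : ∃ n : ℤ, (∑ t : Fin k → Fin 2, HkM k t s * σ t) * 2^k = n := by
  have h1 : ∀ t : Fin k → Fin 2, ∃ n : ℤ, HkM k t s * σ t * 2^k = n := by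
    intro t
    have h2 : HkM k t s * 2^k
        = ((∏ i, (if t i = 1 ∧ s i = 1 then (-1:ℤ) else 1) : ℤ) : ℝ) := by
      rw [show (2:ℝ)^k = ∏ _i : Fin k, (2:ℝ) by simp, HkM, ← Finset.prod_mul_distrib,
        Int.cast_prod]
      refine Finset.prod_congr rfl (fun i _ => ?_)
      rw [Hm]; split <;> simp
    rcases hσ t with h | h
    · exact ⟨∏ i, (if t i = 1 ∧ s i = 1 then (-1:ℤ) else 1), by
        rw [show HkM k t s * σ t * 2^k = HkM k t s * 2^k * σ t by ring, h2, h, mul_one]⟩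
    · exact ⟨-∏ i, (if t i = 1 ∧ s i = 1 then (-1:ℤ) else 1), by
        rw [show HkM k t s * σ t * 2^k = HkM k t s * 2^k * σ t by ring, h2, h]
        push_cast; ring⟩
  choose f hf using h1
  refine ⟨∑ t, f t, ?_⟩
  rw [Finset.sum_mul]
  push_cast
  exact Finset.sum_congr rfl (fun t _ => hf t)

lemma w_l1_int (σ : (Fin k → Fin 2) → ℝ) (hσ : ∀ t, σ t = 1 ∨ σ t = -1) :
    ∃ N : ℤ, (∑ s : Fin k → Fin 2, |∑ t : Fin k → Fin 2, HkM k t s * σ t|) * 2^k = N := by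
  choose f hf using w_int k σ hσ
  refine ⟨∑ s, |f s|, ?_⟩
  rw [Finset.sum_mul]
  push_cast
  refine Finset.sum_congr rfl (fun s _ => ?_)
  rw [← abs_of_nonneg (show (0:ℝ) ≤ 2^k by positivity), ← abs_mul, hf s]

lemma w_l1_ne (hk : Odd k) (σ : (Fin k → Fin 2) → ℝ) (hσ : ∀ t, σ t = 1 ∨ σ t = -1) :
    (∑ s : Fin k → Fin 2, |∑ t : Fin k → Fin 2, HkM k t s * σ t|) ≠ Real.sqrt 2 ^ k := by
  obtain ⟨p, hp⟩ := hk
  obtain ⟨N, hN⟩ := w_l1_int k σ hσ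
  intro h
  have h2 : Real.sqrt 2 ^ k = 2^p * Real.sqrt 2 := by
    rw [hp, pow_succ, pow_mul, Real.sq_sqrt (by norm_num)]
  have h4 : Real.sqrt 2 * 2^(p+k) = N := by
    rw [pow_add, ← mul_assoc, mul_comm (Real.sqrt 2) ((2:ℝ)^p), ← h2, ← h, hN]
  have h5 : Real.sqrt 2 = (N:ℝ) / 2^(p+k) := by
    rw [← h4]; field_simp
  exact irrational_sqrt_two ⟨(N:ℚ)/2^(p+k), by push_cast; rw [h5]⟩

/-! ## The finite sup over sign vectors -/

def sg (σb : (Fin k → Fin 2) → Bool) (t : Fin k → Fin 2) : ℝ := if σb t then 1 else -1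

lemma sg_pm (σb) (t) : sg k σb t = 1 ∨ sg k σb t = -1 := by
  rw [sg]; split <;> simp

lemma abs_sg_le (σb) (t) : |sg k σb t| ≤ 1 := by
  rcases sg_pm k σb t with h | h <;> rw [h] <;> norm_num

def G : ℝ := Finset.univ.sup' Finset.univ_nonempty
  (fun σb : (Fin k → Fin 2) → Bool => ∑ s : Fin k → Fin 2, |∑ t, HkM k t s * sg k σb t|)

lemma F_le_G (c : (Fin k → Fin 2) → ℝ) (hc : ∀ s, |c s| ≤ 1) :
    ∑ t : Fin k → Fin 2, |∑ s, HkM k t s * c s| ≤ G k := by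
  classical
  set σb : (Fin k → Fin 2) → Bool := fun t => decide (0 ≤ ∑ s, HkM k t s * c s) with hσb
  have h1 : ∀ t, |∑ s, HkM k t s * c s| = sg k σb t * ∑ s, HkM k t s * c s := by
    intro t
    rcases le_or_gt 0 (∑ s, HkM k t s * c s) with h | h
    · have hb : σb t = true := decide_eq_true h
      rw [abs_of_nonneg h]; simp [sg, hb]
    · have hb : σb t = false := decide_eq_false (not_le.2 h)
      rw [abs_of_neg h]; simp [sg, hb]
  calc ∑ t : Fin k → Fin 2, |∑ s, HkM k t s * c s|
      = ∑ t : Fin k → Fin 2, ∑ s, sg k σb t * (HkM k t s * c s) := by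
        refine Finset.sum_congr rfl (fun t _ => ?_)
        rw [h1 t, Finset.mul_sum]
    _ = ∑ s : Fin k → Fin 2, (∑ t, HkM k t s * sg k σb t) * c s := by
        rw [Finset.sum_comm]
        refine Finset.sum_congr rfl (fun s _ => ?_)
        rw [Finset.sum_mul]
        exact Finset.sum_congr rfl (fun t _ => by ring)
    _ ≤ ∑ s : Fin k → Fin 2, |∑ t, HkM k t s * sg k σb t| := by
        refine Finset.sum_le_sum (fun s _ => ?_)
        calc (∑ t, HkM k t s * sg k σb t) * c s
            ≤ |(∑ t, HkM k t s * sg k σb t) * c s| := le_abs_self _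
          _ = |∑ t, HkM k t s * sg k σb t| * |c s| := abs_mul _ _
          _ ≤ |∑ t, HkM k t s * sg k σb t| * 1 :=
              mul_le_mul_of_nonneg_left (hc s) (abs_nonneg _)
          _ = _ := mul_one _
    _ ≤ G k := Finset.le_sup'
        (f := fun σb : (Fin k → Fin 2) → Bool => ∑ s : Fin k → Fin 2, |∑ t, HkM k t s * sg k σb t|)
        (Finset.mem_univ σb)

lemma G_le : G k ≤ Real.sqrt 2 ^ k :=
  Finset.sup'_le _ _ (fun σb _ => cs_bound k _ (abs_sg_le k σb))

lemma G_lt (hk : Odd k) : G k < Real.sqrt 2 ^ k :=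
  (Finset.sup'_lt_iff _).2 (fun σb _ =>
    lt_of_le_of_ne (cs_bound k _ (abs_sg_le k σb)) (w_l1_ne k hk _ (sg_pm k σb)))

end HadAux

/-! ## Witness pattern vector -/

namespace HadAux

def x2 (a b : Fin 2) : ℝ := if a = 1 ∧ b = 1 then -1 else 1

lemma abs_x2 (a b : Fin 2) : |x2 a b| = 1 := by
  rw [x2]; split <;> norm_num

variable (k : ℕ)

def blockEquiv : ((Fin (k/2) × Fin 2) ⊕ Fin (k % 2)) ≃ Fin k :=
  (Equiv.sumCongr finProdFinEquiv (Equiv.refl (Fin (k % 2)))).trans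
    (finSumFinEquiv.trans (finCongr (by omega)))

def pat (s : Fin k → Fin 2) : ℝ :=
  ∏ j : Fin (k/2), x2 (s (blockEquiv k (Sum.inl (j, 0)))) (s (blockEquiv k (Sum.inl (j, 1))))

lemma abs_pat_le (s : Fin k → Fin 2) : |pat k s| ≤ 1 := by
  rw [pat, Finset.abs_prod]
  refine le_of_eq (Finset.prod_eq_one (fun j _ => abs_x2 _ _))

/-- single block sum: `x^T (H ⊗ H) x = 2` for `x = (1,1,1,-1)` -/
lemma block_sum :
    ∑ h : Fin 2 → (Fin 2 × Fin 2),
      (x2 (h 0).1 (h 1).1 * x2 (h 0).2 (h 1).2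
        * (Hm (h 0).1 (h 0).2 * Hm (h 1).1 (h 1).2)) = 2 := by
  have h1 : ∑ h : Fin 2 → (Fin 2 × Fin 2),
      (x2 (h 0).1 (h 1).1 * x2 (h 0).2 (h 1).2
        * (Hm (h 0).1 (h 0).2 * Hm (h 1).1 (h 1).2))
      = ∑ pq : (Fin 2 × Fin 2) × (Fin 2 × Fin 2),
        x2 pq.1.1 pq.2.1 * x2 pq.1.2 pq.2.2 * (Hm pq.1.1 pq.1.2 * Hm pq.2.1 pq.2.2) :=
    Fintype.sum_equiv (piFinTwoEquiv (fun _ => Fin 2 × Fin 2)) _ _ (fun h => rfl)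
  rw [h1, Fintype.sum_prod_type]
  simp only [Fintype.sum_prod_type, Fin.sum_univ_two]
  norm_num [x2, Hm]

lemma hm_diag_sum : ∑ v : Fin 2 × Fin 2, Hm v.1 v.2 = 1 := by
  rw [Fintype.sum_prod_type]
  simp only [Fin.sum_univ_two]
  norm_num [Hm]

lemma B_eq :
    ∑ t : Fin k → Fin 2, pat k t * ∑ s : Fin k → Fin 2, HkM k t s * pat k s
      = 2 ^ (k / 2) := by
  classical
  set V := (Fin 2 × Fin 2)
  set I := (Fin (k/2) × Fin 2)
  set L := Fin (k % 2)
  set e := blockEquiv k with he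
  -- integrand over combined functions
  set f : (Fin k → Fin 2) → (Fin k → Fin 2) → ℝ :=
    fun t s => pat k t * (HkM k t s * pat k s) with hf
  have step0 : ∑ t : Fin k → Fin 2, pat k t * ∑ s : Fin k → Fin 2, HkM k t s * pat k s
      = ∑ t, ∑ s, f t s := by
    refine Finset.sum_congr rfl (fun t _ => ?_)
    rw [Finset.mul_sum]
  rw [step0]
  -- combine (t,s) into u : Fin k → V
  have step1 : ∑ t, ∑ s, f t s
      = ∑ u : Fin k → V, f (fun i => (u i).1) (fun i => (u i).2) := by
    rw [← Fintype.sum_prod_type']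
    exact (Fintype.sum_equiv (Equiv.arrowProdEquivProdArrow _ _ _)
      (fun u => f (fun i => (u i).1) (fun i => (u i).2))
      (fun ts => f ts.1 ts.2) (fun u => rfl)).symm
  rw [step1]
  -- reindex by blockEquiv
  have step2 : ∑ u : Fin k → V, f (fun i => (u i).1) (fun i => (u i).2)
      = ∑ w : I ⊕ L → V,
          (∏ j : Fin (k/2),
            (x2 (w (Sum.inl (j, 0))).1 (w (Sum.inl (j, 1))).1
              * x2 (w (Sum.inl (j, 0))).2 (w (Sum.inl (j, 1))).2
              * (Hm (w (Sum.inl (j, 0))).1 (w (Sum.inl (j, 0))).2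
                  * Hm (w (Sum.inl (j, 1))).1 (w (Sum.inl (j, 1))).2)))
          * ∏ l : L, Hm (w (Sum.inr l)).1 (w (Sum.inr l)).2 := by
    refine Fintype.sum_equiv (Equiv.arrowCongr e.symm (Equiv.refl V)) _ _ (fun u => ?_)
    have harr : ∀ z : I ⊕ L, (Equiv.arrowCongr e.symm (Equiv.refl V) u) z = u (e z) := by
      intro z; simp [Equiv.arrowCongr_apply, Function.comp]
    -- compute both pat factors and the HkM factor
    have hpt : pat k (fun i => (u i).1)
        = ∏ j : Fin (k/2), x2 (u (e (Sum.inl (j,0)))).1 (u (e (Sum.inl (j,1)))).1 := rfl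
    have hps : pat k (fun i => (u i).2)
        = ∏ j : Fin (k/2), x2 (u (e (Sum.inl (j,0)))).2 (u (e (Sum.inl (j,1)))).2 := rfl
    have hH : HkM k (fun i => (u i).1) (fun i => (u i).2)
        = (∏ j : Fin (k/2), (Hm (u (e (Sum.inl (j,0)))).1 (u (e (Sum.inl (j,0)))).2
            * Hm (u (e (Sum.inl (j,1)))).1 (u (e (Sum.inl (j,1)))).2))
          * ∏ l : L, Hm (u (e (Sum.inr l))).1 (u (e (Sum.inr l))).2 := by
      rw [HkM]
      rw [← Equiv.prod_comp e (fun i => Hm (u i).1 (u i).2)]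
      rw [Fintype.prod_sum_type, Fintype.prod_prod_type]
      rw [Finset.prod_congr rfl (fun j (_ : j ∈ (Finset.univ : Finset (Fin (k/2)))) =>
        Fin.prod_univ_two (fun r => Hm (u (e (Sum.inl (j, r)))).1 (u (e (Sum.inl (j, r)))).2))]
    rw [hf]
    simp only [harr]
    rw [hpt, hps, hH]
    rw [show ∀ (A B C D : ℝ), A * ((C * D) * B) = ((A * B) * C) * D from fun A B C D => by ring]
    rw [← Finset.prod_mul_distrib, ← Finset.prod_mul_distrib]
  rw [step2]
  -- split into block part and leftover part
  have step4 : ∑ w : I ⊕ L → V,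
      (∏ j : Fin (k/2),
        (x2 (w (Sum.inl (j, 0))).1 (w (Sum.inl (j, 1))).1
          * x2 (w (Sum.inl (j, 0))).2 (w (Sum.inl (j, 1))).2
          * (Hm (w (Sum.inl (j, 0))).1 (w (Sum.inl (j, 0))).2
              * Hm (w (Sum.inl (j, 1))).1 (w (Sum.inl (j, 1))).2)))
      * ∏ l : L, Hm (w (Sum.inr l)).1 (w (Sum.inr l)).2
      = (∑ a : I → V, ∏ j : Fin (k/2),
          (x2 (a (j, 0)).1 (a (j, 1)).1 * x2 (a (j, 0)).2 (a (j, 1)).2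
            * (Hm (a (j, 0)).1 (a (j, 0)).2 * Hm (a (j, 1)).1 (a (j, 1)).2)))
        * ∑ b : L → V, ∏ l : L, Hm (b l).1 (b l).2 := by
    rw [Finset.sum_mul_sum]
    rw [← Fintype.sum_prod_type']
    exact Fintype.sum_equiv (Equiv.sumArrowEquivProdArrow I L V) _ _ (fun w => rfl)
  rw [step4]
  -- leftover part equals 1
  have hleft : ∑ b : L → V, ∏ l : L, Hm (b l).1 (b l).2 = 1 := by
    rw [← Fintype.prod_sum (fun _l : L => fun v : V => Hm v.1 v.2)]
    rw [Finset.prod_congr rfl (fun l _ => hm_diag_sum)]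
    simp
  rw [hleft, mul_one]
  -- block part equals 2 ^ (k/2)
  have hblock : ∑ a : I → V, ∏ j : Fin (k/2),
      (x2 (a (j, 0)).1 (a (j, 1)).1 * x2 (a (j, 0)).2 (a (j, 1)).2
        * (Hm (a (j, 0)).1 (a (j, 0)).2 * Hm (a (j, 1)).1 (a (j, 1)).2))
      = 2 ^ (k / 2) := by
    have hcur : ∑ a : I → V, ∏ j : Fin (k/2),
        (x2 (a (j, 0)).1 (a (j, 1)).1 * x2 (a (j, 0)).2 (a (j, 1)).2
          * (Hm (a (j, 0)).1 (a (j, 0)).2 * Hm (a (j, 1)).1 (a (j, 1)).2))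
        = ∑ m : Fin (k/2) → (Fin 2 → V), ∏ j : Fin (k/2),
          (x2 (m j 0).1 (m j 1).1 * x2 (m j 0).2 (m j 1).2
            * (Hm (m j 0).1 (m j 0).2 * Hm (m j 1).1 (m j 1).2)) :=
      Fintype.sum_equiv (Equiv.curry (Fin (k/2)) (Fin 2) V) _ _ (fun a => rfl)
    rw [hcur]
    rw [← Fintype.prod_sum (fun _j : Fin (k/2) => fun h : Fin 2 → V =>
      x2 (h 0).1 (h 1).1 * x2 (h 0).2 (h 1).2
        * (Hm (h 0).1 (h 0).2 * Hm (h 1).1 (h 1).2))]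
    have hone : ∑ h : Fin 2 → V,
        (x2 (h 0).1 (h 1).1 * x2 (h 0).2 (h 1).2
          * (Hm (h 0).1 (h 0).2 * Hm (h 1).1 (h 1).2)) = 2 := by
      exact block_sum
    rw [Finset.prod_congr rfl (fun j _ => hone)]
    simp
  rw [hblock]

lemma witness_lower :
    2 ^ (k / 2) ≤ ∑ t : Fin k → Fin 2, |∑ s : Fin k → Fin 2, HkM k t s * pat k s| := by
  rw [← B_eq k]
  refine Finset.sum_le_sum (fun t _ => ?_)
  calc pat k t * ∑ s, HkM k t s * pat k s
      ≤ |pat k t * ∑ s, HkM k t s * pat k s| := le_abs_self _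
    _ = |pat k t| * |∑ s, HkM k t s * pat k s| := abs_mul _ _
    _ ≤ 1 * |∑ s, HkM k t s * pat k s| :=
        mul_le_mul_of_nonneg_right (abs_pat_le k t) (abs_nonneg _)
    _ = _ := one_mul _

end HadAux

/-! ## tau level assembly -/

namespace HadAux

variable (k : ℕ)

def Aset : Set ℝ := { r | ∃ z : ⨂[ℝ] _ : Fin k, Sp ⊤, injNorm k z ≤ 1 ∧
      r = projNorm k (tensorPow k hadamardOp z) }

lemma tau_def : tau k hadamardOp = (sSup (Aset k)) ^ ((k : ℝ)⁻¹) := rfl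

lemma value_eq (hk : 1 ≤ k) (z : ⨂[ℝ] _ : Fin k, Sp ⊤) :
    projNorm k (tensorPow k hadamardOp z)
      = ∑ t : Fin k → Fin 2, |∑ s : Fin k → Fin 2, HkM k t s * coef ⊤ k s z| := by
  rw [projNorm_eq k hk]
  refine Finset.sum_congr rfl (fun t _ => ?_)
  rw [coef_tensorPow k z t]
  exact congrArg abs (Finset.sum_congr rfl (fun s _ => by rw [HkM]))

lemma zero_mem (hk : 1 ≤ k) : (0:ℝ) ∈ Aset k := by
  refine ⟨0, injNorm_le_one k hk 0 (fun s => by simp), ?_⟩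
  rw [value_eq k hk 0]
  simp

lemma Aset_le_G (hk : 1 ≤ k) : ∀ r ∈ Aset k, r ≤ G k := by
  rintro r ⟨z, hz, rfl⟩
  rw [value_eq k hk z]
  exact F_le_G k _ (fun s => (abs_coef_le_injNorm k hk z s).trans hz)

lemma sSup_Aset_le (hk : 1 ≤ k) : sSup (Aset k) ≤ G k :=
  csSup_le ⟨0, zero_mem k hk⟩ (Aset_le_G k hk)

lemma sSup_Aset_nonneg (hk : 1 ≤ k) : 0 ≤ sSup (Aset k) :=
  le_csSup ⟨G k, Aset_le_G k hk⟩ (zero_mem k hk)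

def zW : ⨂[ℝ] _ : Fin k, Sp ⊤ := ∑ s : Fin k → Fin 2, pat k s • bT ⊤ k s

lemma coef_zW (s : Fin k → Fin 2) : coef ⊤ k s (zW k) = pat k s := by
  rw [zW, map_sum]
  rw [Finset.sum_congr rfl (fun s' (_ : s' ∈ Finset.univ) => by
    rw [LinearMap.map_smul, coef_bT, smul_eq_mul] :
    ∀ s' ∈ Finset.univ, coef ⊤ k s (pat k s' • bT ⊤ k s')
      = pat k s' * if s' = s then 1 else 0)]
  simp only [mul_ite, mul_one, mul_zero, Finset.sum_ite_eq', Finset.mem_univ, if_true]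

lemma witness_mem (hk : 1 ≤ k) :
    projNorm k (tensorPow k hadamardOp (zW k)) ∈ Aset k :=
  ⟨zW k, injNorm_le_one k hk _ (fun s => by rw [coef_zW]; exact abs_pat_le k s), rfl⟩

lemma sSup_Aset_ge (hk : 1 ≤ k) : (2:ℝ) ^ (k / 2) ≤ sSup (Aset k) := by
  refine le_trans ?_ (le_csSup ⟨G k, Aset_le_G k hk⟩ (witness_mem k hk))
  rw [value_eq k hk]
  refine le_trans (witness_lower k) (le_of_eq ?_)
  refine Finset.sum_congr rfl (fun t _ => ?_)
  exact congrArg abs (Finset.sum_congr rfl (fun s _ => by rw [coef_zW]))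

lemma rpow_aux (hk : 1 ≤ k) (x : ℝ) (hx : 0 ≤ x) : (x ^ k) ^ ((k:ℝ)⁻¹) = x := by
  rw [← Real.rpow_natCast x k, ← Real.rpow_mul hx,
    mul_inv_cancel₀ (Nat.cast_ne_zero.mpr (by omega)), Real.rpow_one]

lemma tau_le (hk : 1 ≤ k) : tau k hadamardOp ≤ Real.sqrt 2 := by
  rw [tau_def]
  calc (sSup (Aset k)) ^ ((k:ℝ)⁻¹)
      ≤ (Real.sqrt 2 ^ k) ^ ((k:ℝ)⁻¹) :=
        Real.rpow_le_rpow (sSup_Aset_nonneg k hk)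
          ((sSup_Aset_le k hk).trans (G_le k)) (by positivity)
    _ = Real.sqrt 2 := rpow_aux k hk _ (Real.sqrt_nonneg 2)

lemma tau_even (p : ℕ) (hp : 1 ≤ p) : tau (2*p) hadamardOp = Real.sqrt 2 := by
  have hk : 1 ≤ 2*p := by omega
  have hpow : (2:ℝ) ^ ((2*p) / 2) = Real.sqrt 2 ^ (2*p) := by
    rw [Nat.mul_div_cancel_left p (by norm_num), pow_mul,
      Real.sq_sqrt (by norm_num : (0:ℝ) ≤ 2)]
  have h1 : sSup (Aset (2*p)) = Real.sqrt 2 ^ (2*p) := by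
    refine le_antisymm ((sSup_Aset_le _ hk).trans (G_le _)) ?_
    rw [← hpow]
    exact sSup_Aset_ge _ hk
  rw [tau_def, h1]
  exact rpow_aux _ hk _ (Real.sqrt_nonneg 2)

lemma tau_odd (hk : Odd k) : tau k hadamardOp < Real.sqrt 2 := by
  have hk1 : 1 ≤ k := by obtain ⟨p, hp⟩ := hk; omega
  rw [tau_def]
  calc (sSup (Aset k)) ^ ((k:ℝ)⁻¹)
      < (Real.sqrt 2 ^ k) ^ ((k:ℝ)⁻¹) :=
        Real.rpow_lt_rpow (sSup_Aset_nonneg k hk1)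
          (lt_of_le_of_lt (sSup_Aset_le k hk1) (G_lt k hk)) (by positivity)
    _ = Real.sqrt 2 := rpow_aux k hk1 _ (Real.sqrt_nonneg 2)

lemma tau_ge (hk : 1 ≤ k) :
    ((2:ℝ) ^ (k / 2 : ℕ)) ^ ((k:ℝ)⁻¹) ≤ tau k hadamardOp := by
  rw [tau_def]
  exact Real.rpow_le_rpow (by positivity) (sSup_Aset_ge k hk) (by positivity)

lemma tendsto_exponent :
    Tendsto (fun k : ℕ => ((k / 2 : ℕ) : ℝ) * (k:ℝ)⁻¹) atTop (nhds (1/2)) := by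
  have h0 : Tendsto (fun k : ℕ => (k:ℝ)⁻¹) atTop (nhds 0) :=
    tendsto_inv_atTop_nhds_zero_nat
  have hlow : Tendsto (fun k : ℕ => 1/2 - (k:ℝ)⁻¹) atTop (nhds (1/2)) := by
    have := (tendsto_const_nhds : Tendsto (fun _ : ℕ => (1:ℝ)/2) atTop (nhds (1/2))).sub h0
    simpa using this
  refine tendsto_of_tendsto_of_tendsto_of_le_of_le' hlow tendsto_const_nhds ?_ ?_
  · refine Filter.eventually_atTop.2 ⟨1, fun k hk => ?_⟩
    have hk0 : (0:ℝ) < (k:ℝ) := by exact_mod_cast hk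
    have hipos : (0:ℝ) < (k:ℝ)⁻¹ := by positivity
    have hki : (k:ℝ) * (k:ℝ)⁻¹ = 1 := mul_inv_cancel₀ (ne_of_gt hk0)
    have h1 : ((k:ℝ) - 1) / 2 ≤ ((k / 2 : ℕ) : ℝ) := by
      have h2 : k ≤ 2 * (k / 2) + 1 := by omega
      have h3 : (k:ℝ) ≤ 2 * ((k / 2 : ℕ) : ℝ) + 1 := by exact_mod_cast h2
      linarith
    have hfin : 1/2 - (k:ℝ)⁻¹ ≤ (((k:ℝ) - 1) / 2) * (k:ℝ)⁻¹ := by nlinarith [hki, hipos]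
    exact hfin.trans (mul_le_mul_of_nonneg_right h1 (le_of_lt hipos))
  · refine Filter.eventually_atTop.2 ⟨1, fun k hk => ?_⟩
    have hk0 : (0:ℝ) < (k:ℝ) := by exact_mod_cast hk
    have hkne : (k:ℝ) ≠ 0 := ne_of_gt hk0
    have h1 : ((k / 2 : ℕ) : ℝ) ≤ (k:ℝ) / 2 := by
      have h2 : 2 * (k / 2) ≤ k := by omega
      have h3 : 2 * ((k / 2 : ℕ) : ℝ) ≤ (k:ℝ) := by exact_mod_cast h2
      linarith
    calc ((k / 2 : ℕ) : ℝ) * (k:ℝ)⁻¹ ≤ ((k:ℝ)/2) * (k:ℝ)⁻¹ :=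
          mul_le_mul_of_nonneg_right h1 (by positivity)
      _ = 1/2 := by field_simp

lemma tendsto_tau :
    Tendsto (fun k : ℕ => tau k hadamardOp) atTop (nhds (Real.sqrt 2)) := by
  have hcont : ContinuousAt (fun x : ℝ => (2:ℝ) ^ x) (1/2) :=
    Real.continuousAt_const_rpow (by norm_num)
  have hval : (2:ℝ) ^ ((1:ℝ)/2) = Real.sqrt 2 := (Real.sqrt_eq_rpow 2).symm
  have hlow0 : Tendsto (fun k : ℕ => (2:ℝ) ^ (((k / 2 : ℕ) : ℝ) * (k:ℝ)⁻¹)) atTop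
      (nhds (Real.sqrt 2)) := by
    rw [← hval]
    exact Filter.Tendsto.comp hcont tendsto_exponent
  have hlow : Tendsto (fun k : ℕ => ((2:ℝ) ^ (k / 2 : ℕ)) ^ ((k:ℝ)⁻¹)) atTop
      (nhds (Real.sqrt 2)) := by
    refine hlow0.congr (fun k => ?_)
    rw [← Real.rpow_natCast (2:ℝ) (k/2), ← Real.rpow_mul (by norm_num)]
  refine tendsto_of_tendsto_of_tendsto_of_le_of_le' hlow tendsto_const_nhds ?_ ?_
  · exact Filter.eventually_atTop.2 ⟨1, fun k hk => tau_ge k hk⟩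
  · exact Filter.eventually_atTop.2 ⟨1, fun k hk => tau_le k hk⟩

lemma tauInf_eq : tauInf hadamardOp = Real.sqrt 2 := by
  have hub : ∀ r ∈ { r | ∃ k : ℕ, 1 ≤ k ∧ r = tau k hadamardOp }, r ≤ Real.sqrt 2 := by
    rintro r ⟨k, hk, rfl⟩; exact tau_le k hk
  refine le_antisymm (csSup_le ⟨tau 1 hadamardOp, 1, le_refl 1, rfl⟩ hub) ?_
  have h2 : tau 2 hadamardOp = Real.sqrt 2 := by
    have := tau_even 1 le_rfl
    norm_num at this
    exact this
  rw [← h2]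
  exact le_csSup ⟨Real.sqrt 2, hub⟩ ⟨2, by norm_num, rfl⟩

end HadAux

/-! ## Nuclear norm of the Hadamard operator -/

namespace HadAux

lemma norm_evC (u : Fin 2) : ‖evC u‖ = 1 := by
  refine le_antisymm (norm_evC_le u) ?_
  calc (1:ℝ) = |evC u (bv ⊤ u)| := by simp [bv_apply]
    _ ≤ ‖evC u‖ * ‖bv ⊤ u‖ := (evC u).le_opNorm _
    _ ≤ ‖evC u‖ * 1 := mul_le_mul_of_nonneg_left (norm_bv_inf_le u) (norm_nonneg _)
    _ = ‖evC u‖ := mul_one _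

def gN (j : Fin 2) : Sp ⊤ →L[ℝ] ℝ := (2⁻¹ : ℝ) • evC j

def yN (j : Fin 2) : Sp 1 := bv 1 0 + (if j = 0 then bv 1 1 else -(bv 1 1))

lemma norm_gN (j : Fin 2) : ‖gN j‖ = 1/2 := by
  rw [gN, norm_smul ((2:ℝ)⁻¹) (evC j), norm_evC]
  norm_num

lemma norm_yN (j : Fin 2) : ‖yN j‖ = 2 := by
  rw [norm_one_eq, Fin.sum_univ_two]
  fin_cases j <;>
    simp [yN, PiLp.add_apply, PiLp.neg_apply, bv_apply] <;> norm_num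

lemma had_rep (v : Sp ⊤) : hadamardOp v = ∑ j, gN j v • yN j := by
  ext t
  rw [had_coord]
  fin_cases t <;>
    simp only [WithLp.ofLp_sum, Fin.sum_univ_two, PiLp.add_apply, PiLp.smul_apply, PiLp.neg_apply,
      smul_eq_mul, gN, yN, ContinuousLinearMap.smul_apply, evC_apply, bv_apply,
      Fin.mk_zero, Fin.mk_one] <;>
    norm_num [Hm, bv_apply]

lemma nuclear_eq : nuclearNorm hadamardOp = 2 := by
  have hmem : (2:ℝ) ∈ { r | ∃ (n : ℕ) (g : Fin n → (Sp ⊤ →L[ℝ] ℝ)) (y : Fin n → Sp 1),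
      (∀ v, hadamardOp v = ∑ j, g j v • y j) ∧ r = ∑ j, ‖g j‖ * ‖y j‖ } := by
    refine ⟨2, gN, yN, had_rep, ?_⟩
    rw [Fin.sum_univ_two, norm_gN, norm_gN, norm_yN, norm_yN]
    norm_num
  refine le_antisymm ?_ ?_
  · refine csInf_le ⟨0, ?_⟩ hmem
    rintro r ⟨n, g, y, -, rfl⟩
    exact Finset.sum_nonneg (fun j _ => mul_nonneg (norm_nonneg _) (norm_nonneg _))
  · refine le_csInf ⟨2, hmem⟩ ?_
    rintro r ⟨n, g, y, hrep, rfl⟩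
    have key : ∀ u t : Fin 2, Hm t u = ∑ j, g j (bv ⊤ u) * y j t := by
      intro u t
      have h1 : hadamardOp (bv ⊤ u) t = (∑ j, g j (bv ⊤ u) • y j) t :=
        congrArg (fun w : Sp 1 => w t) (hrep (bv ⊤ u))
      rw [had_coord] at h1
      rw [WithLp.ofLp_sum, Finset.sum_apply t Finset.univ (fun j => (g j (bv ⊤ u) • y j).ofLp)] at h1
      simp only [PiLp.smul_apply, smul_eq_mul] at h1
      rw [← h1, bv_apply, bv_apply]
      fin_cases u <;> norm_num
    have hbound : ∀ j, g j ((y j 0 + y j 1) • bv ⊤ 0 + (y j 0 - y j 1) • bv ⊤ 1)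
        ≤ ‖g j‖ * ‖y j‖ := by
      intro j
      have hw : ‖(y j 0 + y j 1) • bv ⊤ 0 + (y j 0 - y j 1) • bv ⊤ 1‖ ≤ ‖y j‖ := by
        refine norm_inf_le _ _ (fun t => ?_)
        rw [norm_one_eq (y j), Fin.sum_univ_two]
        have ht : ((y j 0 + y j 1) • bv ⊤ 0 + (y j 0 - y j 1) • bv ⊤ 1) t
            = (y j 0 + y j 1) * bv ⊤ 0 t + (y j 0 - y j 1) * bv ⊤ 1 t := rfl
        rw [ht]
        fin_cases t <;> simp [bv_apply] <;>
          [exact abs_add_le _ _;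
           exact (abs_sub _ _)]
      calc g j _ ≤ |g j _| := le_abs_self _
        _ ≤ ‖g j‖ * ‖_‖ := (g j).le_opNorm _
        _ ≤ ‖g j‖ * ‖y j‖ := mul_le_mul_of_nonneg_left hw (norm_nonneg _)
    have h2 : (2:ℝ) = ∑ j, g j ((y j 0 + y j 1) • bv ⊤ 0 + (y j 0 - y j 1) • bv ⊤ 1) := by
      have expand : ∀ j, g j ((y j 0 + y j 1) • bv ⊤ 0 + (y j 0 - y j 1) • bv ⊤ 1)
          = (y j 0 + y j 1) * g j (bv ⊤ 0) + (y j 0 - y j 1) * g j (bv ⊤ 1) := by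
        intro j
        rw [map_add, ContinuousLinearMap.map_smul, ContinuousLinearMap.map_smul,
          smul_eq_mul, smul_eq_mul]
      rw [Finset.sum_congr rfl (fun j _ => expand j)]
      have hsplit : ∑ j, ((y j 0 + y j 1) * g j (bv ⊤ 0) + (y j 0 - y j 1) * g j (bv ⊤ 1))
          = ((∑ j, g j (bv ⊤ 0) * y j 0) + (∑ j, g j (bv ⊤ 0) * y j 1))
            + ((∑ j, g j (bv ⊤ 1) * y j 0) - (∑ j, g j (bv ⊤ 1) * y j 1)) := by
        rw [← Finset.sum_sub_distrib, ← Finset.sum_add_distrib, ← Finset.sum_add_distrib]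
        exact Finset.sum_congr rfl (fun j _ => by ring)
      rw [hsplit, ← key 0 0, ← key 0 1, ← key 1 0, ← key 1 1]
      norm_num [Hm]
    calc (2:ℝ) = _ := h2
      _ ≤ ∑ j, ‖g j‖ * ‖y j‖ := Finset.sum_le_sum (fun j _ => hbound j)

lemma sqrt2_lt_2 : Real.sqrt 2 < 2 := by
  have h : Real.sqrt 2 < Real.sqrt 4 := Real.sqrt_lt_sqrt (by norm_num) (by norm_num)
  rwa [show (4:ℝ) = 2^2 by norm_num, Real.sqrt_sq (by norm_num : (0:ℝ) ≤ 2)] at h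

end HadAux

theorem hadamard_tensor_radius :
    (∀ k : ℕ, 1 ≤ k → tau k hadamardOp ≤ Real.sqrt 2) ∧
    (∀ p : ℕ, 1 ≤ p → tau (2 * p) hadamardOp = Real.sqrt 2) ∧
    (∀ k : ℕ, Odd k → tau k hadamardOp < Real.sqrt 2) ∧
    Filter.Tendsto (fun k : ℕ => tau k hadamardOp) Filter.atTop (nhds (Real.sqrt 2)) ∧
    tauInf hadamardOp = Real.sqrt 2 ∧
    nuclearNorm hadamardOp = 2 ∧
    Real.sqrt 2 < 2 :=
  ⟨fun k hk => HadAux.tau_le k hk, fun p hp => HadAux.tau_even p hp,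
    fun k hk => HadAux.tau_odd k hk, HadAux.tendsto_tau, HadAux.tauInf_eq,
    HadAux.nuclear_eq, HadAux.sqrt2_lt_2⟩
end
end
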